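/- arXiv:2306.11237 — 6 statements merged into one kernel-verified Lean document; each statement's English description precedes it below -/
import Mathlib

section
/- Let ρ_{AB} be a density operator, 𝒢 the twirling channel for a finite group G acting via (U_g ⊗ I), and ℬ a measurement channel on B. Suppose ρ_{AB} = √(𝒢(ρ_{AB})) · (√(𝒢∘ℬ(ρ_{AB})))^{-1} · ℬ(ρ_{AB}) · (√(𝒢∘ℬ(ρ_{AB})))^{-1} · √(𝒢(ρ_{AB})) as operators on the support of 𝒢∘ℬ(ρ_{AB}) (pseudoinverses taken on that support). Then there exists a completely positive trace-preserving map Γ such that Γ(ℬ(U_g ρ_{AB} U_g†)) = U_g ρ_{AB} U_g† for all g ∈ G, where U_g abbreviates U_g ⊗ I. -/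
open scoped Matrix Kronecker ComplexOrder
open Matrix

namespace DenseCoding

variable {n : Type*}

/-- Spectral functional calculus of a Hermitian matrix (0 on non-Hermitian input). -/
noncomputable def funCalc [Fintype n] [DecidableEq n] (f : ℝ → ℝ) (A : Matrix n n ℂ) :
    Matrix n n ℂ :=
  if hA : A.IsHermitian then
    (hA.eigenvectorUnitary : Matrix n n ℂ) *
      Matrix.diagonal (fun i => (f (hA.eigenvalues i) : ℂ)) *
      (star (hA.eigenvectorUnitary : Matrix n n ℂ))
  else 0

/-- Matrix logarithm (via the spectral decomposition). -/
noncomputable def mLog [Fintype n] [DecidableEq n] (A : Matrix n n ℂ) : Matrix n n ℂ :=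
  funCalc Real.log A

/-- Matrix square root (via the spectral decomposition). -/
noncomputable def mSqrt [Fintype n] [DecidableEq n] (A : Matrix n n ℂ) : Matrix n n ℂ :=
  funCalc Real.sqrt A

/-- Pseudo-inverse of the square root, taken on the support. -/
noncomputable def mPinvSqrt [Fintype n] [DecidableEq n] (A : Matrix n n ℂ) : Matrix n n ℂ :=
  funCalc (fun x => if x = 0 then 0 else 1 / Real.sqrt x) A

/-- von Neumann entropy H(A) = -Tr A log A, via eigenvalues. -/
noncomputable def vnEntropy [Fintype n] [DecidableEq n] (A : Matrix n n ℂ) : ℝ :=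
  if hA : A.IsHermitian then -∑ i, hA.eigenvalues i * Real.log (hA.eigenvalues i) else 0

/-- Quantum relative entropy D(ρ‖σ) = Tr ρ (log ρ - log σ). -/
noncomputable def relEntropy [Fintype n] [DecidableEq n] (ρ σ : Matrix n n ℂ) : ℝ :=
  ((ρ * (mLog ρ - mLog σ)).trace).re

/-- Density operator: positive semidefinite with unit trace. -/
def IsDensity [Fintype n] (ρ : Matrix n n ℂ) : Prop := ρ.PosSemidef ∧ ρ.trace = 1

/-- Projective unitary representation: each U g is unitary and
    U g * U g' = c(g,g') • U (g g') for unit complex numbers c(g,g'). -/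
def IsProjUnitaryRep {G : Type*} [Group G] [Fintype n] [DecidableEq n]
    (U : G → Matrix n n ℂ) : Prop :=
  (∀ g, U g ∈ Matrix.unitaryGroup n ℂ) ∧
    ∀ g g', ∃ c : ℂ, ‖c‖ = 1 ∧ U g * U g' = c • U (g * g')

/-- The group twirling channel 𝒢(ρ) = (1/|G|) Σ_g (U_g ⊗ I) ρ (U_g ⊗ I)†. -/
noncomputable def twirl {G a b : Type*} [Fintype G] [Fintype a] [Fintype b] [DecidableEq b]
    (U : G → Matrix a a ℂ) (ρ : Matrix (a × b) (a × b) ℂ) : Matrix (a × b) (a × b) ℂ :=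
  (Fintype.card G : ℂ)⁻¹ •
    ∑ g, (U g ⊗ₖ (1 : Matrix b b ℂ)) * ρ * (U g ⊗ₖ (1 : Matrix b b ℂ))ᴴ

/-- Rank-one outer product |x⟩⟨x|. -/
def outer {b : Type*} (x : b → ℂ) : Matrix b b ℂ := Matrix.vecMulVec x (star x)

/-- Measurement channel on B in the (orthonormal) family e:
    ℬ(ρ) = Σ_k (I ⊗ |e_k⟩⟨e_k|) ρ (I ⊗ |e_k⟩⟨e_k|). -/
noncomputable def meas {a b ι : Type*} [Fintype a] [Fintype b] [Fintype ι] [DecidableEq a]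
    (e : ι → b → ℂ) (ρ : Matrix (a × b) (a × b) ℂ) : Matrix (a × b) (a × b) ℂ :=
  ∑ k, ((1 : Matrix a a ℂ) ⊗ₖ outer (e k)) * ρ * ((1 : Matrix a a ℂ) ⊗ₖ outer (e k))

/-- A family of vectors is orthonormal. -/
def OrthoFam {ι b : Type*} [Fintype b] [DecidableEq ι] (e : ι → b → ℂ) : Prop :=
  ∀ k k', ∑ i, star (e k i) * e k' i = if k = k' then 1 else 0

/-- Completely positive trace-preserving map, via a Kraus representation. -/
def IsCPTP {n m : Type*} [Fintype n] [Fintype m] [DecidableEq n] [DecidableEq m] (Γ : Matrix n n ℂ → Matrix m m ℂ) : Prop :=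
  ∃ (N : ℕ) (K : Fin N → Matrix m n ℂ),
    (∀ ρ, Γ ρ = ∑ t, K t * ρ * (K t)ᴴ) ∧ (∑ t, (K t)ᴴ * K t = 1)

/-- Gram matrix J(V)_{λη} = ⟨v_λ|v_η⟩ of a family of vectors. -/
noncomputable def gram {l β : Type*} [Fintype β] (v : l → β → ℂ) : Matrix l l ℂ :=
  Matrix.of fun i j => ∑ k, v i k * star (v j k)

/-- The maximally coherent state projector |+⟩⟨+| on C^l. -/
noncomputable def plusMat (l : ℕ) : Matrix (Fin l) (Fin l) ℂ := Matrix.of fun _ _ => (l : ℂ)⁻¹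

/-- Incoherent (diagonal) unitary Z_k = Σ_λ e^{iθ_{λ,k}}|λ⟩⟨λ|. -/
noncomputable def diagPhase {l κ : Type*} [DecidableEq l] (θ : l → κ → ℝ) (k : κ) :
    Matrix l l ℂ :=
  Matrix.diagonal fun i => Complex.exp (Complex.I * θ i k)

/-- Shannon entropy of a distribution. -/
noncomputable def shannonEntropy {ι : Type*} [Fintype ι] (P : ι → ℝ) : ℝ :=
  -∑ i, P i * Real.log (P i)


/-- The phase e^{2πi x / l}. -/
noncomputable def phase (l : ℕ) (x : ℤ) : ℂ :=
  Complex.exp (((2 * Real.pi * x / l : ℝ) : ℂ) * Complex.I)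

/-!
Write `S = √𝒢(ρ)`, `P` for the pseudo-inverse of `√𝒢ℬ(ρ)`, `Q_k` for the measurement projections
and `R` for the projection onto `ker 𝒢ℬ(ρ)`. Since `ℬ` commutes with the twirl, `𝒢ℬ(ρ) = ℬ𝒢(ρ)`,
so `∑ₖ P Q_k S² Q_k P = P ℬ𝒢(ρ) P` is the support projection of `𝒢ℬ(ρ)` and `{S Q_k P} ∪ {R}` is a
Kraus family. The twirl commutes with each `U_g ⊗ I`, hence so do `S` and `P`; as `ℬ` is idempotent
and its projections commute with `P`, the channel sends `ℬ(U_g ρ U_g†)` to `U_g (S P ℬ(ρ) P S) U_g†`,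
which is `U_g ρ U_g†` by the Petz condition. The `R`-term vanishes because `ℬ(U_g ρ U_g†)` is one of
the positive summands of `𝒢ℬ(ρ)`, onto whose kernel `R` projects.
-/

open scoped MatrixOrder

section FunctionalCalculus

variable {m : Type*} [Fintype m] [DecidableEq m]

theorem funCalc_eq_cfc (f : ℝ → ℝ) (A : Matrix m m ℂ) : funCalc f A = cfc f A := by
  by_cases hA : A.IsHermitian
  · rw [hA.cfc_eq, IsHermitian.cfc, Unitary.conjStarAlgAut_apply, funCalc, dif_pos hA]
    rfl
  · rw [funCalc, dif_neg hA, cfc_apply_of_not_predicate A (show ¬IsSelfAdjoint A from hA)]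

theorem conjTranspose_funCalc (f : ℝ → ℝ) (A : Matrix m m ℂ) : (funCalc f A)ᴴ = funCalc f A := by
  rw [funCalc_eq_cfc]
  exact cfc_predicate f A

theorem _root_.Commute.funCalc {A B : Matrix m m ℂ} (h : Commute A B) (f : ℝ → ℝ) :
    Commute (funCalc f A) B := by
  rw [funCalc_eq_cfc]
  exact h.cfc_real f

theorem funCalc_mul_mul_funCalc {A : Matrix m m ℂ} (hA : A.IsHermitian) (f g : ℝ → ℝ) :
    funCalc f A * A * funCalc g A = funCalc (fun x => f x * x * g x) A := by
  have hc : ∀ f : ℝ → ℝ, ContinuousOn f (spectrum ℝ A) := fun f =>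
    A.finite_real_spectrum.continuousOn f
  simp only [funCalc_eq_cfc]
  nth_rw 2 [← cfc_id' ℝ A hA.isSelfAdjoint]
  rw [← cfc_mul _ _ _ (hc _) (hc _), ← cfc_mul _ _ _ (hc _) (hc _)]

theorem mSqrt_mul_mSqrt {A : Matrix m m ℂ} (hA : A.PosSemidef) : mSqrt A * mSqrt A = A := by
  rw [mSqrt, funCalc_eq_cfc, ← cfc_mul Real.sqrt Real.sqrt A]
  conv_rhs => rw [← cfc_id' ℝ A hA.isHermitian.isSelfAdjoint]
  refine cfc_congr fun x hx => Real.mul_self_sqrt ?_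
  exact spectrum_nonneg_of_nonneg hA.nonneg hx

noncomputable def kerProj (A : Matrix m m ℂ) : Matrix m m ℂ :=
  funCalc (fun x => if x = 0 then 1 else 0) A

theorem mPinvSqrt_mul_mul_mPinvSqrt_add_kerProj_mul_kerProj {A : Matrix m m ℂ}
    (hA : A.PosSemidef) : mPinvSqrt A * A * mPinvSqrt A + kerProj A * kerProj A = 1 := by
  have hc : ∀ f : ℝ → ℝ, ContinuousOn f (spectrum ℝ A) := fun f =>
    A.finite_real_spectrum.continuousOn f
  rw [mPinvSqrt, kerProj, funCalc_mul_mul_funCalc hA.isHermitian]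
  simp only [funCalc_eq_cfc]
  rw [← cfc_mul _ _ _ (hc _) (hc _), ← cfc_add _ _ _ (hc _) (hc _),
    ← cfc_const_one ℝ A hA.isHermitian.isSelfAdjoint]
  refine cfc_congr fun x hx => ?_
  have hx : 0 ≤ x := spectrum_nonneg_of_nonneg hA.nonneg hx
  rcases hx.eq_or_lt with rfl | hx
  · simp
  · have : Real.sqrt x ^ 2 = x := Real.sq_sqrt hx.le
    simp only [hx.ne', if_false]
    field_simp
    linarith

theorem conjTranspose_kerProj (A : Matrix m m ℂ) : (kerProj A)ᴴ = kerProj A :=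
  conjTranspose_funCalc _ A

theorem kerProj_mul_mul_kerProj {A : Matrix m m ℂ} (hA : A.IsHermitian) :
    kerProj A * A * kerProj A = 0 := by
  rw [kerProj, funCalc_mul_mul_funCalc hA, funCalc_eq_cfc]
  convert cfc_const_zero ℝ A using 2
  funext x
  split_ifs <;> simp_all

end FunctionalCalculus

section Measurement

variable {a b ι : Type*} [DecidableEq a]

theorem conjTranspose_outer (x : b → ℂ) : (outer x)ᴴ = outer x := by
  simp [outer, conjTranspose_vecMulVec]

theorem outer_mul_outer [Fintype b] [DecidableEq ι] {e : ι → b → ℂ} (he : OrthoFam e) (k k' : ι) :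
    outer (e k) * outer (e k') = if k = k' then outer (e k) else 0 := by
  have hkk' : star (e k) ⬝ᵥ e k' = if k = k' then 1 else 0 := he k k'
  rw [outer, outer, vecMulVec_mul_vecMulVec, hkk']
  split_ifs with h <;> simp [h]

noncomputable def measProj (e : ι → b → ℂ) (k : ι) : Matrix (a × b) (a × b) ℂ :=
  (1 : Matrix a a ℂ) ⊗ₖ outer (e k)

theorem conjTranspose_measProj (e : ι → b → ℂ) (k : ι) :
    (measProj e k : Matrix (a × b) (a × b) ℂ)ᴴ = measProj e k := by
  rw [measProj, conjTranspose_kronecker, conjTranspose_one, conjTranspose_outer]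

theorem commute_kronecker_one_measProj [Fintype a] [Fintype b] [DecidableEq b] (W : Matrix a a ℂ)
    (e : ι → b → ℂ) (k : ι) : Commute (W ⊗ₖ (1 : Matrix b b ℂ)) (measProj e k) := by
  simp only [Commute, SemiconjBy, measProj, ← mul_kronecker_mul, Matrix.mul_one, Matrix.one_mul]

variable [Fintype a] [Fintype b] {e : ι → b → ℂ}

theorem measProj_mul_measProj [DecidableEq ι] (he : OrthoFam e) (k k' : ι) :
    (measProj e k * measProj e k' : Matrix (a × b) (a × b) ℂ) =
      if k = k' then measProj e k else 0 := by
  rw [measProj, measProj, ← mul_kronecker_mul, Matrix.one_mul, outer_mul_outer he]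
  split_ifs <;> simp

variable [Fintype ι]

theorem meas_eq_sum (e : ι → b → ℂ) (M : Matrix (a × b) (a × b) ℂ) :
    meas e M = ∑ k, measProj e k * M * measProj e k := rfl

theorem posSemidef_meas {M : Matrix (a × b) (a × b) ℂ} (hM : M.PosSemidef) (e : ι → b → ℂ) :
    (meas e M).PosSemidef := by
  rw [meas_eq_sum]
  refine posSemidef_sum _ fun k _ => ?_
  simpa only [conjTranspose_measProj] using hM.mul_mul_conjTranspose_same (measProj e k)

theorem meas_conj_of_commute {W : Matrix (a × b) (a × b) ℂ} (hW : ∀ k, Commute W (measProj e k))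
    (M : Matrix (a × b) (a × b) ℂ) : meas e (W * M * Wᴴ) = W * meas e M * Wᴴ := by
  rw [meas_eq_sum, meas_eq_sum, Finset.mul_sum, Finset.sum_mul]
  refine Finset.sum_congr rfl fun k _ => ?_
  have hW' : Commute Wᴴ (measProj e k) := by
    simpa only [star_eq_conjTranspose, conjTranspose_measProj] using (hW k).star_star
  simp only [← Matrix.mul_assoc, (hW k).eq]
  simp only [Matrix.mul_assoc, hW'.eq]

variable [DecidableEq ι]

theorem measProj_mul_meas (he : OrthoFam e) (k : ι) (M : Matrix (a × b) (a × b) ℂ) :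
    measProj e k * meas e M = measProj e k * M * measProj e k := by
  simp only [meas_eq_sum, Finset.mul_sum, ← Matrix.mul_assoc, measProj_mul_measProj he]
  simp

theorem meas_mul_measProj (he : OrthoFam e) (k : ι) (M : Matrix (a × b) (a × b) ℂ) :
    meas e M * measProj e k = measProj e k * M * measProj e k := by
  simp only [meas_eq_sum, Finset.sum_mul, Matrix.mul_assoc, measProj_mul_measProj he]
  simp

theorem commute_measProj_meas (he : OrthoFam e) (k : ι) (M : Matrix (a × b) (a × b) ℂ) :
    Commute (measProj e k) (meas e M) :=
  (measProj_mul_meas he k M).trans (meas_mul_measProj he k M).symm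

theorem meas_meas (he : OrthoFam e) (M : Matrix (a × b) (a × b) ℂ) :
    meas e (meas e M) = meas e M := by
  rw [meas_eq_sum e (meas e M)]
  conv_rhs => rw [meas_eq_sum]
  refine Finset.sum_congr rfl fun k _ => ?_
  rw [measProj_mul_meas he, Matrix.mul_assoc, measProj_mul_measProj he, if_pos rfl]

end Measurement

section ProjectiveRep

variable {G n : Type*} [Group G] [Fintype G] [Fintype n] [DecidableEq n] {V : G → Matrix n n ℂ}

theorem IsProjUnitaryRep.conj_sum_conj (hV : IsProjUnitaryRep V) (g : G) (M : Matrix n n ℂ) :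
    V g * (∑ h, V h * M * (V h)ᴴ) * (V g)ᴴ = ∑ h, V h * M * (V h)ᴴ := by
  rw [Finset.mul_sum, Finset.sum_mul]
  refine Fintype.sum_equiv (Equiv.mulLeft g) _ _ fun h => ?_
  obtain ⟨c, hc, hgh⟩ := hV.2 g h
  have hcc : star c * c = 1 := by
    rw [Complex.star_def, Complex.conj_mul', hc]
    norm_num
  calc V g * (V h * M * (V h)ᴴ) * (V g)ᴴ = (V g * V h) * M * (V g * V h)ᴴ := by
        simp only [conjTranspose_mul, Matrix.mul_assoc]
    _ = V (g * h) * M * (V (g * h))ᴴ := by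
        rw [hgh, conjTranspose_smul, smul_mul_assoc, mul_smul_comm, smul_mul_assoc, smul_smul, hcc,
          one_smul]

theorem IsProjUnitaryRep.commute_sum_conj (hV : IsProjUnitaryRep V) (g : G) (M : Matrix n n ℂ) :
    Commute (V g) (∑ h, V h * M * (V h)ᴴ) := by
  have hunit : (V g)ᴴ * V g = 1 := Matrix.mem_unitaryGroup_iff'.mp (hV.1 g)
  calc V g * ∑ h, V h * M * (V h)ᴴ = V g * (∑ h, V h * M * (V h)ᴴ) * ((V g)ᴴ * V g) := by
        rw [hunit, Matrix.mul_one]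
    _ = (∑ h, V h * M * (V h)ᴴ) * V g := by
        rw [← Matrix.mul_assoc, hV.conj_sum_conj]

end ProjectiveRep

section Twirl

variable {G a b : Type*} [Fintype a] [Fintype b] [DecidableEq b]

theorem posSemidef_twirl [Fintype G] {M : Matrix (a × b) (a × b) ℂ} (hM : M.PosSemidef)
    (U : G → Matrix a a ℂ) : (twirl U M).PosSemidef := by
  refine PosSemidef.smul (posSemidef_sum _ fun g _ => hM.mul_mul_conjTranspose_same _) ?_
  positivity

theorem conj_eq_zero_of_conj_twirl_eq_zero [Fintype G] [Nonempty G] {U : G → Matrix a a ℂ}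
    {M R : Matrix (a × b) (a × b) ℂ} (hM : M.PosSemidef) (hR : Rᴴ * twirl U M * R = 0) (g : G) :
    Rᴴ * ((U g ⊗ₖ (1 : Matrix b b ℂ)) * M * (U g ⊗ₖ (1 : Matrix b b ℂ))ᴴ) * R = 0 := by
  set V : G → Matrix (a × b) (a × b) ℂ := fun g => U g ⊗ₖ (1 : Matrix b b ℂ)
  have hsum : ∑ h, Rᴴ * (V h * M * (V h)ᴴ) * R = 0 := by
    rw [twirl, mul_smul_comm, smul_mul_assoc, Finset.mul_sum, Finset.sum_mul] at hR
    exact (smul_eq_zero.mp hR).resolve_left (by simp)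
  have hpsd : ∀ h, 0 ≤ Rᴴ * (V h * M * (V h)ᴴ) * R := fun h => by
    rw [nonneg_iff_posSemidef]
    simpa only [conjTranspose_mul, conjTranspose_conjTranspose, Matrix.mul_assoc] using
      hM.mul_mul_conjTranspose_same (Rᴴ * V h)
  exact (Finset.sum_eq_zero_iff_of_nonneg fun h _ => hpsd h).mp hsum g (Finset.mem_univ g)

variable [DecidableEq a]

theorem meas_twirl [Fintype G] {ι : Type*} [Fintype ι] (U : G → Matrix a a ℂ) (e : ι → b → ℂ)
    (M : Matrix (a × b) (a × b) ℂ) : meas e (twirl U M) = twirl U (meas e M) := by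
  calc meas e (twirl U M)
      = (Fintype.card G : ℂ)⁻¹ •
          ∑ g, meas e ((U g ⊗ₖ (1 : Matrix b b ℂ)) * M * (U g ⊗ₖ (1 : Matrix b b ℂ))ᴴ) := by
        simp only [twirl, meas_eq_sum, Finset.smul_sum, Finset.mul_sum, Finset.sum_mul,
          mul_smul_comm, smul_mul_assoc]
        exact Finset.sum_comm
    _ = twirl U (meas e M) := by
        simp only [twirl, meas_conj_of_commute (commute_kronecker_one_measProj _ e)]

variable [Group G] {U : G → Matrix a a ℂ}

theorem IsProjUnitaryRep.kronecker_one (hU : IsProjUnitaryRep U) :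
    IsProjUnitaryRep fun g => U g ⊗ₖ (1 : Matrix b b ℂ) := by
  refine ⟨fun g => kronecker_mem_unitary (hU.1 g) (one_mem _), fun g h => ?_⟩
  obtain ⟨c, hc, hgh⟩ := hU.2 g h
  exact ⟨c, hc, by rw [← mul_kronecker_mul, hgh, Matrix.one_mul, smul_kronecker]⟩

theorem commute_twirl [Fintype G] (hU : IsProjUnitaryRep U) (g : G) (M : Matrix (a × b) (a × b) ℂ) :
    Commute (U g ⊗ₖ (1 : Matrix b b ℂ)) (twirl U M) :=
  ((hU.kronecker_one (b := b)).commute_sum_conj g M).smul_right _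

end Twirl

section Recovery

theorem _root_.Commute.conj_conj_comm {n R : Type*} [Fintype n] [CommSemiring R] [StarRing R]
    {A W : Matrix n n R} (h : Commute A W) (X : Matrix n n R) :
    A * (W * X * Wᴴ) * Aᴴ = W * (A * X * Aᴴ) * Wᴴ := by
  have h' : Commute Aᴴ Wᴴ := by simpa only [star_eq_conjTranspose] using h.star_star
  simp only [← Matrix.mul_assoc, h.eq]
  simp only [Matrix.mul_assoc, h'.eq]

noncomputable def krausMap {m n ι : Type*} [Fintype n] [Fintype ι] (K : ι → Matrix m n ℂ)
    (X : Matrix n n ℂ) : Matrix m m ℂ :=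
  ∑ t, K t * X * (K t)ᴴ

theorem isCPTP_krausMap {m n ι : Type*} [Fintype m] [Fintype n] [DecidableEq m] [DecidableEq n]
    [Fintype ι] {K : ι → Matrix m n ℂ} (hK : ∑ t, (K t)ᴴ * K t = 1) : IsCPTP (krausMap K) := by
  let eqv := Fintype.equivFin ι
  refine ⟨Fintype.card ι, fun t => K (eqv.symm t), fun X => ?_, ?_⟩
  · exact Fintype.sum_equiv eqv _ _ fun t => by simp
  · rw [← hK]
    exact (Fintype.sum_equiv eqv _ _ fun t => by simp).symm

variable {a b ι : Type*} [Fintype a] [DecidableEq a] [Fintype b] [DecidableEq b] [Fintype ι]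

/-- The Kraus operators `T * measProj e k` of the Petz map `X ↦ T (meas e X) Tᴴ`, where
`T = √σ (√(meas e σ))⁻¹`, plus the projection onto `ker (meas e σ)`, which stands in for the identity
on the orthogonal complement of the support. -/
noncomputable def petzKraus (e : ι → b → ℂ) (σ : Matrix (a × b) (a × b) ℂ) :
    Option ι → Matrix (a × b) (a × b) ℂ
  | none => kerProj (meas e σ)
  | some k => mSqrt σ * measProj e k * mPinvSqrt (meas e σ)

theorem sum_conjTranspose_mul_petzKraus (e : ι → b → ℂ) {σ : Matrix (a × b) (a × b) ℂ}
    (hσ : σ.PosSemidef) : ∑ t, (petzKraus e σ t)ᴴ * petzKraus e σ t = 1 := by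
  have hterm : ∀ k, (petzKraus e σ (some k))ᴴ * petzKraus e σ (some k) =
      mPinvSqrt (meas e σ) * (measProj e k * σ * measProj e k) * mPinvSqrt (meas e σ) := by
    intro k
    simp only [petzKraus, conjTranspose_mul, mSqrt, mPinvSqrt, conjTranspose_funCalc,
      conjTranspose_measProj, Matrix.mul_assoc]
    rw [← Matrix.mul_assoc (funCalc _ σ) (funCalc _ σ), ← mSqrt, mSqrt_mul_mSqrt hσ]
  rw [Fintype.sum_option, Finset.sum_congr rfl fun k _ => hterm k, ← Finset.sum_mul,
    ← Finset.mul_sum, ← meas_eq_sum, petzKraus, conjTranspose_kerProj, add_comm,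
    mPinvSqrt_mul_mul_mPinvSqrt_add_kerProj_mul_kerProj (posSemidef_meas hσ e)]

theorem krausMap_petzKraus [DecidableEq ι] {e : ι → b → ℂ} (he : OrthoFam e)
    (σ X : Matrix (a × b) (a × b) ℂ) :
    krausMap (petzKraus e σ) X =
      (mSqrt σ * mPinvSqrt (meas e σ)) * meas e X * (mSqrt σ * mPinvSqrt (meas e σ))ᴴ +
        kerProj (meas e σ) * X * kerProj (meas e σ) := by
  set T := mSqrt σ * mPinvSqrt (meas e σ)
  have hterm : ∀ k, petzKraus e σ (some k) * X * (petzKraus e σ (some k))ᴴ =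
      T * (measProj e k * X * measProj e k) * Tᴴ := by
    intro k
    have hQP : Commute (measProj e k) (mPinvSqrt (meas e σ)) :=
      ((commute_measProj_meas he k σ).symm.funCalc _).symm
    have hK : petzKraus e σ (some k) = T * measProj e k := by
      rw [petzKraus, Matrix.mul_assoc, hQP.eq, ← Matrix.mul_assoc]
    rw [hK, conjTranspose_mul, conjTranspose_measProj]
    simp only [Matrix.mul_assoc]
  rw [krausMap, Fintype.sum_option, Finset.sum_congr rfl fun k _ => hterm k, ← Finset.sum_mul,
    ← Finset.mul_sum, ← meas_eq_sum, petzKraus, conjTranspose_kerProj, add_comm]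

end Recovery

/-- if the Petz-type equality condition (A2) holds, then there is a
CPTP recovery map Γ with Γ(ℬ(U_g ρ U_g†)) = U_g ρ U_g† for all g (condition (A3)). -/
theorem recovery_of_petz_condition
    {G a b : Type*} [Group G] [Fintype G] [Fintype a] [DecidableEq a]
    [Fintype b] [DecidableEq b]
    (U : G → Matrix a a ℂ) (hU : IsProjUnitaryRep U)
    (e : b → b → ℂ) (he : OrthoFam e)
    (ρ : Matrix (a × b) (a × b) ℂ) (hρ : IsDensity ρ)
    (hA2 : ρ = mSqrt (twirl U ρ) * mPinvSqrt (twirl U (meas e ρ)) * meas e ρ *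
        mPinvSqrt (twirl U (meas e ρ)) * mSqrt (twirl U ρ)) :
    ∃ Γ : Matrix (a × b) (a × b) ℂ → Matrix (a × b) (a × b) ℂ, IsCPTP Γ ∧
      ∀ g, Γ (meas e ((U g ⊗ₖ (1 : Matrix b b ℂ)) * ρ * (U g ⊗ₖ (1 : Matrix b b ℂ))ᴴ)) =
        (U g ⊗ₖ (1 : Matrix b b ℂ)) * ρ * (U g ⊗ₖ (1 : Matrix b b ℂ))ᴴ := by
  obtain ⟨hρ, -⟩ := hρ
  set τ := twirl U (meas e ρ)
  set T := mSqrt (twirl U ρ) * mPinvSqrt τ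
  have hτ : meas e (twirl U ρ) = τ := meas_twirl U e ρ
  have hρT : ρ = T * meas e ρ * Tᴴ := by
    rw [conjTranspose_mul, mSqrt, mPinvSqrt, conjTranspose_funCalc, conjTranspose_funCalc]
    exact hA2.trans (Matrix.mul_assoc _ _ _)
  refine ⟨krausMap (petzKraus e (twirl U ρ)),
    isCPTP_krausMap (sum_conjTranspose_mul_petzKraus e (posSemidef_twirl hρ U)), fun g => ?_⟩
  have hT : Commute T (U g ⊗ₖ (1 : Matrix b b ℂ)) :=
    ((commute_twirl hU g ρ).symm.funCalc _).mul_left ((commute_twirl hU g _).symm.funCalc _)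
  have hker : kerProj τ * ((U g ⊗ₖ (1 : Matrix b b ℂ)) * meas e ρ *
      (U g ⊗ₖ (1 : Matrix b b ℂ))ᴴ) * kerProj τ = 0 := by
    have h := conj_eq_zero_of_conj_twirl_eq_zero (R := kerProj τ) (posSemidef_meas hρ e)
      (by rw [conjTranspose_kerProj]
          exact kerProj_mul_mul_kerProj (posSemidef_twirl (posSemidef_meas hρ e) U).isHermitian) g
    rwa [conjTranspose_kerProj] at h
  have hmeas := meas_conj_of_commute (commute_kronecker_one_measProj (U g) e)
  rw [hmeas, krausMap_petzKraus he, hτ, hmeas, meas_meas he, hker, add_zero, hT.conj_conj_comm,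
    ← hρT]

end DenseCoding
end

section
/- Suppose the Gram matrix J(V) of unit vectors |v_1⟩,…,|v_l⟩ satisfies (1/l)·J(V) = Σ_k P_K(k) Z_k |+⟩⟨+| Z_k† for some probability distribution P_K and diagonal unitaries Z_k = Σ_λ e^{iθ_{λ,k}}|λ⟩⟨λ|, where |+⟩ = (1/√l)Σ_λ|λ⟩. Then the Hadamard-product channel Γ_{J(V)}(ρ) = J(V)⊙ρ equals the probabilistic unitary channel ρ ↦ Σ_k P_K(k) Z_k ρ Z_k†, and conversely. -/
open scoped Matrix Kronecker ComplexOrder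
open Matrix

namespace DenseCoding

variable {n : Type*}

/-!
Conjugation by `diag d` is the Hadamard product with `d d†`. So, with `M = Σ_k P_k z_k z_k†` for
`z_k` the phases of `Z_k`, the left side reads `J(V) = M`, because `|+⟩⟨+|` is `1/l` times the
all-ones matrix, the unit of `⊙`; the right side reads `J(V) ⊙ ρ = M ⊙ ρ` for all `ρ`, which is
the same condition by taking `ρ` all-ones.
-/

section Hadamard

variable {ι κ m α : Type*} [Fintype κ]

theorem sum_hadamard [NonUnitalNonAssocSemiring α] (B : κ → Matrix ι m α) (A : Matrix ι m α) :
    (∑ k, B k) ⊙ A = ∑ k, B k ⊙ A := by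
  ext i j
  simp only [hadamard_apply, Matrix.sum_apply, Finset.sum_mul]

theorem forall_hadamard_eq_iff [MulOneClass α] {B C : Matrix ι m α} :
    (∀ A : Matrix ι m α, B ⊙ A = C ⊙ A) ↔ B = C :=
  ⟨fun h => by simpa using h (of 1), fun h _ => h ▸ rfl⟩

variable [Fintype ι] [DecidableEq ι] [CommSemiring α] [StarRing α]

theorem diagonal_mul_mul_conjTranspose_diagonal (d : ι → α) (A : Matrix ι ι α) :
    diagonal d * A * (diagonal d)ᴴ = vecMulVec d (star d) ⊙ A := by
  ext i j
  simp only [diagonal_conjTranspose, mul_diagonal, diagonal_mul, hadamard_apply, vecMulVec_apply,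
    Pi.star_apply]
  ring

theorem sum_smul_diagonal_mul_mul_conjTranspose_diagonal (c : κ → α) (d : κ → ι → α)
    (A : Matrix ι ι α) :
    ∑ k, c k • (diagonal (d k) * A * (diagonal (d k))ᴴ) =
      (∑ k, c k • vecMulVec (d k) (star (d k))) ⊙ A := by
  simp only [diagonal_mul_mul_conjTranspose_diagonal, sum_hadamard, smul_hadamard]

end Hadamard

theorem plusMat_eq_smul (l : ℕ) : plusMat l = (l : ℂ)⁻¹ • of 1 := by
  ext
  simp [plusMat]

theorem hadamard_eq_prob_incoherent_unitary_iff_general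
    {l : ℕ} (hl : 0 < l) {β κ : Type*} [Fintype β] [Fintype κ]
    (v : Fin l → β → ℂ)
    (P : κ → ℝ)
    (θ : Fin l → κ → ℝ) :
    ((l : ℂ)⁻¹ • gram v = ∑ k, (P k : ℂ) • (diagPhase θ k * plusMat l * (diagPhase θ k)ᴴ)) ↔
    (∀ ρ : Matrix (Fin l) (Fin l) ℂ,
      Matrix.hadamard (gram v) ρ = ∑ k, (P k : ℂ) • (diagPhase θ k * ρ * (diagPhase θ k)ᴴ)) := by
  have hl_inv : (l : ℂ)⁻¹ ≠ 0 := inv_ne_zero (Nat.cast_ne_zero.mpr hl.ne')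
  simp only [diagPhase, sum_smul_diagonal_mul_mul_conjTranspose_diagonal, plusMat_eq_smul,
    hadamard_smul, hadamard_of_one, (smul_right_injective _ hl_inv).eq_iff, forall_hadamard_eq_iff]

/-- (1/l)J(V) = Σ_k P_K(k) Z_k|+⟩⟨+|Z_k† holds if and only if the
Hadamard-product channel J(V)⊙· equals the probabilistic incoherent-unitary channel
ρ ↦ Σ_k P_K(k) Z_k ρ Z_k†. -/
theorem hadamard_eq_prob_incoherent_unitary_iff
    {l : ℕ} (hl : 0 < l) {β κ : Type*} [Fintype β] [Fintype κ]
    (v : Fin l → β → ℂ) (hv : ∀ j, ∑ k, v j k * star (v j k) = 1)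
    (P : κ → ℝ) (hP : ∀ k, 0 ≤ P k) (hP1 : ∑ k, P k = 1)
    (θ : Fin l → κ → ℝ) :
    ((l : ℂ)⁻¹ • gram v = ∑ k, (P k : ℂ) • (diagPhase θ k * plusMat l * (diagPhase θ k)ᴴ)) ↔
    (∀ ρ : Matrix (Fin l) (Fin l) ℂ,
      Matrix.hadamard (gram v) ρ = ∑ k, (P k : ℂ) • (diagPhase θ k * ρ * (diagPhase θ k)ᴴ)) :=
  hadamard_eq_prob_incoherent_unitary_iff_general hl v P θ

end DenseCoding
end

section
/- Let |v_1⟩, |v_2⟩ be any two unit vectors in a Hilbert space of dimension ≥ 2. Then there exist an orthonormal pair |e_1⟩, |e_2⟩ and real numbers θ, θ' such that |v_1⟩ = (1/√2)(|e_1⟩ + |e_2⟩) and |v_2⟩ = (1/√2)(e^{i(θ'+θ)}|e_1⟩ + e^{i(θ'-θ)}|e_2⟩), where e^{iθ'}cos θ = ⟨v_1|v_2⟩. -/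
/-! Write ⟨v₁|v₂⟩ = e^{iθ'} cos θ. After removing the phase, w = e^{-iθ'} v₂ has the real overlap
cos θ with v₁, so w = cos θ v₁ + i sin θ u for a unit vector u orthogonal to v₁ (when sin θ = 0
any such u works, and one exists because the dimension is at least 2). The Hadamard rotation
e₁,₂ = (v₁ ± u)/√2 of the orthonormal pair (v₁, u) is then the required basis, because
e^{±iθ} = cos θ ± i sin θ. -/

open scoped Matrix Kronecker ComplexOrder
open Matrix

namespace DenseCoding

variable {n : Type*}

open scoped InnerProductSpace
open Module

theorem exp_arg_mul_cos_arccos_norm {c : ℂ} (hc : ‖c‖ ≤ 1) :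
    Complex.exp (Complex.I * c.arg) * (Real.cos (Real.arccos ‖c‖) : ℂ) = c := by
  rw [Real.cos_arccos (by linarith [norm_nonneg c]) hc, mul_comm, mul_comm Complex.I,
    Complex.norm_mul_exp_arg_mul_I]

theorem inv_sqrt_two_smul_exp_add_exp_smul_eq_exp_smul {E : Type*} [AddCommGroup E]
    [Module ℂ E] (v u : E) (θ θ' : ℝ) :
    (Real.sqrt 2 : ℂ)⁻¹ •
        (Complex.exp (Complex.I * (θ' + θ)) • (Real.sqrt 2 : ℂ)⁻¹ • (v + u) +
          Complex.exp (Complex.I * (θ' - θ)) • (Real.sqrt 2 : ℂ)⁻¹ • (v - u)) =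
      Complex.exp (Complex.I * θ') • ((Real.cos θ : ℂ) • v + (Complex.I * Real.sin θ) • u) := by
  have hsqrt : (Real.sqrt 2 : ℂ)⁻¹ * (Real.sqrt 2 : ℂ)⁻¹ = 1 / 2 := by
    rw [← mul_inv, ← Complex.ofReal_mul, Real.mul_self_sqrt zero_le_two]
    norm_num
  have hplus : Complex.exp (Complex.I * (θ' + θ)) =
      Complex.exp (Complex.I * θ') * (Real.cos θ + Real.sin θ * Complex.I) := by
    rw [mul_add, Complex.exp_add, Complex.ofReal_cos, Complex.ofReal_sin, Complex.cos_add_sin_I,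
      mul_comm Complex.I (θ : ℂ)]
  have hminus : Complex.exp (Complex.I * (θ' - θ)) =
      Complex.exp (Complex.I * θ') * (Real.cos θ - Real.sin θ * Complex.I) := by
    rw [mul_sub, sub_eq_add_neg, Complex.exp_add, Complex.ofReal_cos, Complex.ofReal_sin,
      Complex.cos_sub_sin_I, neg_mul, mul_comm Complex.I (θ : ℂ)]
  rw [hplus, hminus]
  linear_combination (norm := module)
    hsqrt • ((2 * Complex.exp (Complex.I * θ') * Real.cos θ) • v +
      (2 * Complex.exp (Complex.I * θ') * Real.sin θ * Complex.I) • u)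

section InnerProductSpace

variable {𝕜 E : Type*} [RCLike 𝕜] [NormedAddCommGroup E] [InnerProductSpace 𝕜 E]

theorem exists_norm_eq_one_inner_eq_zero [FiniteDimensional 𝕜 E] (hE : 2 ≤ finrank 𝕜 E)
    (v : E) : ∃ u : E, ‖u‖ = 1 ∧ ⟪v, u⟫_𝕜 = 0 := by
  have hv : finrank 𝕜 (𝕜 ∙ v) ≤ 1 := by simpa using finrank_span_le_card ({v} : Set E)
  obtain ⟨w, hw, hw0⟩ : ∃ w ∈ (𝕜 ∙ v)ᗮ, w ≠ 0 := by
    refine Submodule.exists_mem_ne_zero_of_ne_bot fun h => ?_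
    have := (𝕜 ∙ v).finrank_add_finrank_orthogonal
    rw [h, finrank_bot] at this
    omega
  refine ⟨(‖w‖⁻¹ : 𝕜) • w, norm_smul_inv_norm hw0, ?_⟩
  rw [inner_smul_right, Submodule.mem_orthogonal_singleton_iff_inner_right.1 hw, mul_zero]

variable {v u : E}

theorem norm_add_eq_sqrt_two_of_orthonormal (hv : ‖v‖ = 1) (hu : ‖u‖ = 1)
    (hvu : ⟪v, u⟫_𝕜 = 0) : ‖v + u‖ = Real.sqrt 2 := by
  have hpyth := norm_add_sq_eq_norm_sq_add_norm_sq_of_inner_eq_zero v u hvu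
  rw [hv, hu] at hpyth
  rw [← Real.sqrt_mul_self (norm_nonneg _), hpyth]
  norm_num

theorem inner_add_sub_eq_zero_of_norm_eq (h : ‖v‖ = ‖u‖) (hvu : ⟪v, u⟫_𝕜 = 0) :
    ⟪v + u, v - u⟫_𝕜 = 0 := by
  rw [inner_add_left, inner_sub_right, inner_sub_right, hvu, inner_eq_zero_symm.1 hvu,
    inner_self_eq_norm_sq_to_K, inner_self_eq_norm_sq_to_K, h]
  ring

end InnerProductSpace

section Complex

variable {E : Type*} [NormedAddCommGroup E] [InnerProductSpace ℂ E]

theorem exists_eq_cos_smul_add_I_sin_smul {v w : E} (hv : ‖v‖ = 1) (hw : ‖w‖ = 1) {θ : ℝ}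
    (hvw : ⟪v, w⟫_ℂ = Real.cos θ) (hperp : ∃ u : E, ‖u‖ = 1 ∧ ⟪v, u⟫_ℂ = 0) :
    ∃ u : E, ‖u‖ = 1 ∧ ⟪v, u⟫_ℂ = 0 ∧
      w = (Real.cos θ : ℂ) • v + (Complex.I * Real.sin θ) • u := by
  set r := w - (Real.cos θ : ℂ) • v with hr
  have hvr : ⟪v, r⟫_ℂ = 0 := by
    rw [hr, inner_sub_right, inner_smul_right, hvw, inner_self_eq_norm_sq_to_K, hv]
    simp
  have hnorm_r : ‖r‖ = |Real.sin θ| := by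
    have hpyth := norm_add_sq_eq_norm_sq_add_norm_sq_of_inner_eq_zero (𝕜 := ℂ)
      ((Real.cos θ : ℂ) • v) r (by rw [inner_smul_left, hvr, mul_zero])
    rw [add_sub_cancel, hw, norm_smul, hv, Complex.norm_real, Real.norm_eq_abs] at hpyth
    rw [← sq_eq_sq₀ (norm_nonneg r) (abs_nonneg _), sq_abs]
    nlinarith [Real.sin_sq_add_cos_sq θ, sq_abs (Real.cos θ)]
  by_cases hs : Real.sin θ = 0
  · obtain ⟨u, hu, hvu⟩ := hperp
    refine ⟨u, hu, hvu, ?_⟩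
    rw [hs, Complex.ofReal_zero, mul_zero, zero_smul, add_zero, ← sub_eq_zero, ← hr,
      ← norm_eq_zero, hnorm_r, hs, abs_zero]
  · have hIs : Complex.I * Real.sin θ ≠ 0 := mul_ne_zero Complex.I_ne_zero (by exact_mod_cast hs)
    refine ⟨(Complex.I * Real.sin θ)⁻¹ • r, ?_, ?_, ?_⟩
    · rw [norm_smul, norm_inv, norm_mul, Complex.norm_I, one_mul, Complex.norm_real,
        Real.norm_eq_abs, hnorm_r, inv_mul_cancel₀ (abs_ne_zero.2 hs)]
    · rw [inner_smul_right, hvr, mul_zero]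
    · rw [smul_inv_smul₀ hIs, hr, add_sub_cancel]

theorem norm_inv_sqrt_two_smul_add_of_orthonormal {v u : E} (hv : ‖v‖ = 1) (hu : ‖u‖ = 1)
    (hvu : ⟪v, u⟫_ℂ = 0) : ‖(Real.sqrt 2 : ℂ)⁻¹ • (v + u)‖ = 1 := by
  rw [norm_smul, norm_add_eq_sqrt_two_of_orthonormal hv hu hvu, norm_inv, Complex.norm_real,
    Real.norm_of_nonneg (Real.sqrt_nonneg 2), inv_mul_cancel₀ (by positivity)]

theorem exists_unbiased_orthonormal_pair {v w : E} (hv : ‖v‖ = 1) (hw : ‖w‖ = 1)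
    (hperp : ∃ u : E, ‖u‖ = 1 ∧ ⟪v, u⟫_ℂ = 0) :
    ∃ (e₁ e₂ : E) (θ θ' : ℝ), ‖e₁‖ = 1 ∧ ‖e₂‖ = 1 ∧ ⟪e₁, e₂⟫_ℂ = 0 ∧
      v = (Real.sqrt 2 : ℂ)⁻¹ • (e₁ + e₂) ∧
      w = (Real.sqrt 2 : ℂ)⁻¹ • (Complex.exp (Complex.I * (θ' + θ)) • e₁ +
        Complex.exp (Complex.I * (θ' - θ)) • e₂) ∧
      Complex.exp (Complex.I * θ') * (Real.cos θ : ℂ) = ⟪v, w⟫_ℂ := by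
  have hc : ‖⟪v, w⟫_ℂ‖ ≤ 1 := by simpa [hv, hw] using norm_inner_le_norm (𝕜 := ℂ) v w
  set θ := Real.arccos ‖⟪v, w⟫_ℂ‖
  set z := Complex.exp (Complex.I * (⟪v, w⟫_ℂ).arg)
  have hpolar : z * (Real.cos θ : ℂ) = ⟪v, w⟫_ℂ := exp_arg_mul_cos_arccos_norm hc
  have hz : z ≠ 0 := Complex.exp_ne_zero _
  have hnorm_z : ‖z⁻¹‖ = 1 := by simp [z]
  obtain ⟨u, hu, hvu, hrot⟩ := exists_eq_cos_smul_add_I_sin_smul (w := z⁻¹ • w) (θ := θ) hv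
    (by rw [norm_smul, hnorm_z, hw, one_mul])
    (by rw [inner_smul_right, ← hpolar, inv_mul_cancel_left₀ hz]) hperp
  refine ⟨(Real.sqrt 2 : ℂ)⁻¹ • (v + u), (Real.sqrt 2 : ℂ)⁻¹ • (v - u), θ, (⟪v, w⟫_ℂ).arg,
    ?_, ?_, ?_, ?_, ?_, hpolar⟩
  · exact norm_inv_sqrt_two_smul_add_of_orthonormal hv hu hvu
  · rw [sub_eq_add_neg]
    exact norm_inv_sqrt_two_smul_add_of_orthonormal hv (by rwa [norm_neg])
      (by rw [inner_neg_right, hvu, neg_zero])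
  · rw [inner_smul_left, inner_smul_right,
      inner_add_sub_eq_zero_of_norm_eq (hv.trans hu.symm) hvu, mul_zero, mul_zero]
  · simpa using (inv_sqrt_two_smul_exp_add_exp_smul_eq_exp_smul v u 0 0).symm
  · rw [inv_sqrt_two_smul_exp_add_exp_smul_eq_exp_smul, ← hrot, smul_inv_smul₀ hz]

end Complex

section EuclideanSpace

variable {ι : Type*} [Fintype ι]

theorem sum_star_mul_eq_inner_toLp (x y : ι → ℂ) :
    ∑ i, star (x i) * y i = ⟪WithLp.toLp 2 x, WithLp.toLp 2 y⟫_ℂ := by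
  simp [EuclideanSpace.inner_toLp_toLp, dotProduct, mul_comm]

theorem sum_star_mul_self_eq_one_iff (x : ι → ℂ) :
    ∑ i, star (x i) * x i = 1 ↔ ‖WithLp.toLp 2 x‖ = 1 := by
  rw [sum_star_mul_eq_inner_toLp, inner_self_eq_norm_sq_to_K, ← RCLike.ofReal_pow,
    ← RCLike.ofReal_one (K := ℂ), RCLike.ofReal_inj]
  exact pow_eq_one_iff_of_nonneg (norm_nonneg _) two_ne_zero

end EuclideanSpace

/-- any two unit vectors admit a common unbiased orthonormal pair
representation with equal amplitudes 1/√2 and phases only, with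
e^{iθ'}cos θ = ⟨v₁|v₂⟩ (the l = 2 case of q-memory uselessness). -/
theorem two_unit_vectors_unbiased_basis
    {β : Type*} [Fintype β] (hdim : 2 ≤ Fintype.card β)
    (v₁ v₂ : β → ℂ)
    (hv₁ : ∑ i, star (v₁ i) * v₁ i = 1) (hv₂ : ∑ i, star (v₂ i) * v₂ i = 1) :
    ∃ (e₁ e₂ : β → ℂ) (θ θ' : ℝ),
      (∑ i, star (e₁ i) * e₁ i = 1) ∧ (∑ i, star (e₂ i) * e₂ i = 1) ∧
      (∑ i, star (e₁ i) * e₂ i = 0) ∧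
      (v₁ = fun i => (↑(Real.sqrt 2) : ℂ)⁻¹ * (e₁ i + e₂ i)) ∧
      (v₂ = fun i => (↑(Real.sqrt 2) : ℂ)⁻¹ *
        (Complex.exp (Complex.I * (θ' + θ)) * e₁ i +
         Complex.exp (Complex.I * (θ' - θ)) * e₂ i)) ∧
      Complex.exp (Complex.I * θ') * (Real.cos θ : ℂ) = ∑ i, star (v₁ i) * v₂ i := by
  have hperp := exists_norm_eq_one_inner_eq_zero (𝕜 := ℂ)
    (by rwa [finrank_euclideanSpace]) (WithLp.toLp 2 v₁)
  obtain ⟨e₁, e₂, θ, θ', he₁, he₂, he₁₂, hv, hw, hc⟩ := exists_unbiased_orthonormal_pair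
    ((sum_star_mul_self_eq_one_iff v₁).1 hv₁) ((sum_star_mul_self_eq_one_iff v₂).1 hv₂) hperp
  refine ⟨e₁.ofLp, e₂.ofLp, θ, θ', (sum_star_mul_self_eq_one_iff _).2 he₁,
    (sum_star_mul_self_eq_one_iff _).2 he₂, by rwa [sum_star_mul_eq_inner_toLp], ?_, ?_,
    by rwa [sum_star_mul_eq_inner_toLp]⟩
  · funext i
    simpa [mul_add] using congrArg (fun x : EuclideanSpace ℂ β => x i) hv
  · funext i
    simpa [mul_add] using congrArg (fun x : EuclideanSpace ℂ β => x i) hw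

end DenseCoding
end

section
/- For every l ≥ 4, there exist unit vectors |v_1⟩,…,|v_l⟩ in C² whose Gram matrix J(V) satisfies: there is NO probability distribution P_K on a finite set and no diagonal unitaries Z_k such that (1/l)J(V) = Σ_k P_K(k) Z_k|+⟩⟨+|Z_k†. Explicitly, take v_{j,1} = 1/j, v_{j,2} = i^j √(1 - 1/j²) for j ≤ 4 and v_{j,1} = 1, v_{j,2} = 0 for j > 4; then the four vectors ( \overline{v_{j,t}} v_{j,s} )_{j=1}^l for t,s ∈ {1,2} are linearly independent in C^l, which implies the obstruction. -/
open scoped Matrix Kronecker ComplexOrder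
open Matrix

namespace DenseCoding

variable {n : Type*}

/-!
Write `z_j = e^{iθ_{j,k}}` for a term of the decomposition with `P k > 0`. Testing the identity
`Σ_t |v_{·,t}⟩⟨v_{·,t}| = Σ_k P_k |z_k⟩⟨z_k|` against functionals that kill both columns
`v_{·,t}` shows that `z` lies in their span, `z_j = Σ_t a_t v_{j,t}`. Then `|z_j|² = 1 = ‖v_j‖²`
reads `Σ_{t,s} (ā_t a_s - δ_{ts}) v̄_{j,t} v_{j,s} = 0` for every `j`, so linear independence of
the products forces `ā_t a_s = δ_{ts}`, which no pair `a_1, a_2` satisfies. For the explicit vectors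
independence already holds on the first four coordinates.
-/

open Finset Complex

section General

variable {ι β : Type*}

/-- For the Kraus operators `K_t = diag (v_{·,t})`, the diagonal of `K_t† K_s` is
`krausProducts v (t, s)`. -/
def krausProducts (v : ι → β → ℂ) (ts : β × β) : ι → ℂ := fun j => star (v j ts.1) * v j ts.2

lemma linearIndependent_krausProducts_of_comp {κ : Type*} (v : ι → β → ℂ) (e : κ → ι)
    (h : LinearIndependent ℂ (krausProducts (v ∘ e))) :
    LinearIndependent ℂ (krausProducts v) :=
  h.of_comp (LinearMap.funLeft ℂ ℂ e)

lemma dotProduct_outer_mulVec_star [Fintype ι] (c y : ι → ℂ) :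
    c ⬝ᵥ (outer y *ᵥ star c) = (c ⬝ᵥ y) * star (c ⬝ᵥ y) := by
  rw [outer, vecMulVec_mulVec, star_dotProduct_star, dotProduct_smul, MulOpposite.smul_eq_mul_unop,
    MulOpposite.unop_op, mul_comm]

lemma gram_eq_sum_outer [Fintype β] (v : ι → β → ℂ) :
    gram v = ∑ t, outer (fun j => v j t) := by
  ext i j
  simp [gram, outer, vecMulVec_apply, Matrix.sum_apply]

lemma mem_span_of_sum_outer_eq [Fintype ι] {τ κ : Type*} [Fintype τ] [Fintype κ]
    (x : τ → ι → ℂ) (z : κ → ι → ℂ) (P : κ → ℝ) (hP : ∀ k, 0 ≤ P k)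
    (h : ∑ t, outer (x t) = ∑ k, (P k : ℂ) • outer (z k)) {k : κ} (hk : 0 < P k) :
    z k ∈ Submodule.span ℂ (Set.range x) := by
  classical
  rw [← Subspace.forall_mem_dualAnnihilator_apply_eq_zero_iff]
  intro φ hφ
  set c : ι → ℂ := fun i => φ fun j => if i = j then 1 else 0
  have hφc : ∀ y, φ y = c ⬝ᵥ y := fun y => by
    rw [φ.pi_apply_eq_sum_univ, dotProduct]
    simp only [smul_eq_mul, mul_comm, c]
  have hx : ∀ t, c ⬝ᵥ x t = 0 := fun t => by
    rw [← hφc]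
    exact (Submodule.mem_dualAnnihilator φ).mp hφ _ (Submodule.subset_span ⟨t, rfl⟩)
  have hq := congrArg (fun M => c ⬝ᵥ (M *ᵥ star c)) h
  simp only [sum_mulVec, dotProduct_sum, smul_mulVec, dotProduct_smul,
    dotProduct_outer_mulVec_star, hx, zero_mul, sum_const_zero, star_def, mul_conj,
    smul_eq_mul] at hq
  have hsum : ∑ k, P k * normSq (c ⬝ᵥ z k) = 0 := by exact_mod_cast hq.symm
  have hk0 := (sum_eq_zero_iff_of_nonneg fun k _ => mul_nonneg (hP k) (normSq_nonneg _)).mp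
    hsum k (mem_univ k)
  rw [hφc]
  exact normSq_eq_zero.mp ((mul_eq_zero.mp hk0).resolve_left hk.ne')

lemma notMem_span_of_unimodular [Fintype ι] [Fintype β] [Nontrivial β] (v : ι → β → ℂ)
    (hv : ∀ j, ∑ t, v j t * star (v j t) = 1) (hli : LinearIndependent ℂ (krausProducts v))
    (z : ι → ℂ) (hz : ∀ j, z j * star (z j) = 1) :
    z ∉ Submodule.span ℂ (Set.range fun t j => v j t) := by
  classical
  rw [Submodule.mem_span_range_iff_exists_fun]
  rintro ⟨a, rfl⟩
  have hrel : ∑ ts : β × β, (star (a ts.1) * a ts.2 - if ts.1 = ts.2 then 1 else 0) •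
      krausProducts v ts = 0 := by
    ext j
    have hj := (hz j).trans (hv j).symm
    simp only [Finset.sum_apply, Pi.smul_apply, smul_eq_mul, star_sum, star_mul'] at hj
    simp only [Finset.sum_apply, Pi.smul_apply, smul_eq_mul, krausProducts, Pi.zero_apply,
      Fintype.sum_prod_type, sub_mul, sum_sub_distrib, ite_mul, one_mul, zero_mul,
      sum_ite_eq, mem_univ, if_true]
    rw [sub_eq_zero, sum_congr rfl fun t _ => mul_comm (star (v j t)) (v j t), ← hj, mul_comm,
      sum_mul_sum]
    exact sum_congr rfl fun t _ => sum_congr rfl fun s _ => by ring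
  have hcoef := Fintype.linearIndependent_iff.mp hli _ hrel
  obtain ⟨t, s, hts⟩ := exists_pair_ne β
  have htt := hcoef (t, t)
  have hss := hcoef (s, s)
  have hts' := hcoef (t, s)
  simp only [if_pos, if_neg hts, sub_zero] at htt hss hts'
  exact one_ne_zero (α := ℂ) <| by
    linear_combination star (a s) * a t * hts' - star (a s) * a s * htt - hss

end General

lemma diagPhase_mul_plusMat_mul_conjTranspose {l : ℕ} {κ : Type*} (θ : Fin l → κ → ℝ) (k : κ) :
    diagPhase θ k * plusMat l * (diagPhase θ k)ᴴ =
      (l : ℂ)⁻¹ • outer fun j => exp (I * θ j k) := by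
  ext i j
  simp only [diagPhase, diagonal_conjTranspose, mul_diagonal, diagonal_mul, plusMat, outer,
    of_apply, Matrix.smul_apply, vecMulVec_apply, Pi.star_apply, smul_eq_mul]
  ring

lemma exp_I_mul_ofReal_mul_star (x : ℝ) : exp (I * x) * star (exp (I * x)) = 1 := by
  rw [star_def, mul_conj, normSq_eq_norm_sq, norm_exp_I_mul_ofReal]
  norm_num

theorem not_exists_incoherent_unitary_decomposition {l : ℕ} [NeZero l] {β : Type*} [Fintype β]
    [Nontrivial β] (v : Fin l → β → ℂ) (hv : ∀ j, ∑ t, v j t * star (v j t) = 1)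
    (hli : LinearIndependent ℂ (krausProducts v)) :
    ¬ ∃ (N : ℕ) (P : Fin N → ℝ) (θ : Fin l → Fin N → ℝ),
        (∀ k, 0 ≤ P k) ∧ (∑ k, P k = 1) ∧
        (l : ℂ)⁻¹ • gram v =
          ∑ k, (P k : ℂ) • (diagPhase θ k * plusMat l * (diagPhase θ k)ᴴ) := by
  rintro ⟨N, P, θ, hP0, hP1, hEq⟩
  simp only [diagPhase_mul_plusMat_mul_conjTranspose, smul_comm (P _ : ℂ), ← smul_sum,
    gram_eq_sum_outer] at hEq
  have hdec := smul_right_injective _ (inv_ne_zero (NeZero.ne (l : ℂ))) hEq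
  obtain ⟨k, -, hk⟩ : ∃ k ∈ univ, (0 : Fin N → ℝ) k < P k :=
    exists_lt_of_sum_lt (by simp [hP1])
  exact notMem_span_of_unimodular v hv hli _ (fun j => exp_I_mul_ofReal_mul_star (θ j k))
    (mem_span_of_sum_outer_eq _ _ P hP0 hdec hk)

lemma linearIndependent_krausProducts_four {a b c p q r : ℝ} (ha : 0 < a) (hb : 0 < b)
    (hc : 0 < c) (hp : 0 < p) (hq : 0 < q) (hr : 0 < r) :
    LinearIndependent ℂ (krausProducts
      ![![1, 0], ![(a : ℂ), -(p : ℂ)], ![(b : ℂ), -I * q], ![(c : ℂ), (r : ℂ)]]) := by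
  rw [Fintype.linearIndependent_iff]
  intro g hg
  have E : ∀ m, ∑ ts : Fin 2 × Fin 2, g ts * krausProducts
      ![![1, 0], ![(a : ℂ), -(p : ℂ)], ![(b : ℂ), -I * q], ![(c : ℂ), (r : ℂ)]] ts m = 0 :=
    fun m => by simpa using congrFun hg m
  have E0 := E 0
  have E1 := E 1
  have E2 := E 2
  have E3 := E 3
  simp only [krausProducts, Fintype.sum_prod_type, Fin.sum_univ_two, Fin.isValue, cons_val',
    cons_val_fin_one, cons_val_zero, cons_val_one, Matrix.cons_val, RCLike.star_def, map_one,
    map_zero, map_neg, map_mul, conj_ofReal, conj_I, mul_one, mul_zero, add_zero, neg_mul, mul_neg,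
    neg_neg] at E0 E1 E2 E3
  have hpr : ((p * r * (a * r + c * p) : ℝ) : ℂ) ≠ 0 := ofReal_ne_zero.mpr (by positivity)
  have hp2 : ((p ^ 2 : ℝ) : ℂ) ≠ 0 := ofReal_ne_zero.mpr (by positivity)
  have hbq : ((b * q : ℝ) : ℂ) ≠ 0 := ofReal_ne_zero.mpr (by positivity)
  push_cast at hpr hp2 hbq
  -- given `g (0, 0) = 0`, the equations at `j = 1, 3` involve only `g (1, 1)` and the sum
  -- `g (0, 1) + g (1, 0)`
  have hsum : g (0, 1) + g (1, 0) = 0 := by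
    refine (mul_eq_zero.mp ?_).resolve_left hpr
    linear_combination -(r : ℂ) ^ 2 * E1 + (p : ℂ) ^ 2 * E3 + (a ^ 2 * r ^ 2 - c ^ 2 * p ^ 2) * E0
  have h11 : g (1, 1) = 0 := by
    refine (mul_eq_zero.mp ?_).resolve_left hp2
    linear_combination E1 - (a : ℂ) ^ 2 * E0 + a * p * hsum
  have hdiff : g (1, 0) - g (0, 1) = 0 := by
    refine (mul_eq_zero.mp ?_).resolve_left (mul_ne_zero I_ne_zero hbq)
    linear_combination E2 - (b : ℂ) ^ 2 * E0 + I ^ 2 * q ^ 2 * h11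
  have h01 : g (0, 1) = 0 := by linear_combination (hsum - hdiff) / 2
  have h10 : g (1, 0) = 0 := by linear_combination (hsum + hdiff) / 2
  rintro ⟨t, s⟩
  fin_cases t <;> fin_cases s <;> assumption

lemma inv_mul_star_add_I_pow_mul_sqrt_mul_star {n : ℕ} (hn : 1 ≤ n) :
    (n : ℂ)⁻¹ * star ((n : ℂ)⁻¹) + I ^ n * (√(1 - 1 / (n : ℝ) ^ 2) : ℝ) *
      star (I ^ n * (√(1 - 1 / (n : ℝ) ^ 2) : ℝ)) = 1 := by
  have hx : 0 ≤ 1 - 1 / (n : ℝ) ^ 2 := by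
    rw [sub_nonneg, div_le_one (by positivity)]
    exact one_le_pow₀ (by exact_mod_cast hn)
  simp only [star_def, map_inv₀, map_natCast, mul_conj, normSq_mul, map_pow, normSq_I, one_pow,
    one_mul, normSq_ofReal, Real.mul_self_sqrt hx]
  push_cast
  ring

/-- for every l ≥ 4 the explicit family of unit vectors in ℂ²
(v_{j,1} = 1/j, v_{j,2} = i^j√(1-1/j²) for j ≤ 4; v_{j,1} = 1, v_{j,2} = 0 for j > 4)
has linearly independent products ( \bar v_{j,t} v_{j,s} )_j, and its Gram matrix admits
NO decomposition (1/l)J(V) = Σ_k P_K(k) Z_k|+⟩⟨+|Z_k† with diagonal unitaries Z_k. -/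
theorem explicit_q_memory_useful
    (l : ℕ) (hl : 4 ≤ l)
    (v : Fin l → Fin 2 → ℂ)
    (hv : v = fun j =>
      ![if (j.val + 1) ≤ 4 then ((j.val + 1 : ℕ) : ℂ)⁻¹ else 1,
        if (j.val + 1) ≤ 4 then
          Complex.I ^ (j.val + 1) * (↑(Real.sqrt (1 - 1 / ((j.val + 1 : ℕ) : ℝ) ^ 2)) : ℂ)
        else 0]) :
    (∀ j, ∑ k, v j k * star (v j k) = 1) ∧
    LinearIndependent ℂ
      (fun ts : Fin 2 × Fin 2 => (fun j => star (v j ts.1) * v j ts.2 : Fin l → ℂ)) ∧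
    ¬ ∃ (N : ℕ) (P : Fin N → ℝ) (θ : Fin l → Fin N → ℝ),
        (∀ k, 0 ≤ P k) ∧ (∑ k, P k = 1) ∧
        (l : ℂ)⁻¹ • gram v =
          ∑ k, (P k : ℂ) • (diagPhase θ k * plusMat l * (diagPhase θ k)ᴴ) := by
  have : NeZero l := ⟨by omega⟩
  have hunit : ∀ j, ∑ k, v j k * star (v j k) = 1 := by
    intro j
    simp only [hv, Fin.sum_univ_two, cons_val_zero, cons_val_one, cons_val_fin_one]
    split_ifs
    · exact inv_mul_star_add_I_pow_mul_sqrt_mul_star (by omega)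
    · simp
  have hv4 : v ∘ Fin.castLE hl = ![![1, 0], ![((2⁻¹ : ℝ) : ℂ), -(√(3 / 4) : ℝ)],
      ![((3⁻¹ : ℝ) : ℂ), -I * (√(8 / 9) : ℝ)], ![((4⁻¹ : ℝ) : ℂ), (√(15 / 16) : ℝ)]] := by
    funext m t
    fin_cases m <;> fin_cases t <;> norm_num [hv]
  have hli : LinearIndependent ℂ (krausProducts v) := by
    refine linearIndependent_krausProducts_of_comp v (Fin.castLE hl) ?_
    rw [hv4]
    exact linearIndependent_krausProducts_four (by norm_num) (by norm_num) (by norm_num)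
      (by positivity) (by positivity) (by positivity)
  exact ⟨hunit, hli, not_exists_incoherent_unitary_decomposition v hunit hli⟩

end DenseCoding
end

section
/- Let p be a prime and n ≥ m ≥ 1. The number of m-dimensional subspaces of F_p^{2n} that are totally isotropic with respect to the standard symplectic form equals (p^{2n}-1)(p^{2(n-1)}-1)⋯(p^{2(n-m+1)}-1) / ((p^m-1)(p^{m-1}-1)⋯(p-1)). In particular, for m = n this equals (p^n+1)(p^{n-1}+1)⋯(p+1). -/
open scoped Matrix Kronecker ComplexOrder
open Matrix

namespace DenseCoding

variable {n : Type*}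

/-- The number of m-dimensional totally isotropic subspaces of F_p^{2n} for the
standard symplectic form ⟨(a,b),(a',b')⟩ = a·b' - a'·b. -/
noncomputable def isoCount (p n m : ℕ) : ℕ :=
  Nat.card {W : Submodule (ZMod p) ((Fin n → ZMod p) × (Fin n → ZMod p)) //
    Module.finrank (ZMod p) ↥W = m ∧
    ∀ x ∈ W, ∀ y ∈ W, dotProduct x.1 y.2 - dotProduct y.1 x.2 = 0}

end DenseCoding

/-!
Count the linearly independent isotropic `m`-tuples of a `2n`-dimensional symplectic space over
`𝔽_q` in two ways. Building a tuple vector by vector, the `(i+1)`-st vector must lie in the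
orthogonal of the span of the first `i` (dimension `2n - i`) but not in that span (dimension `i`),
which leaves `q^(2n-i) - q^i` choices. On the other hand every tuple spans a totally isotropic
`m`-dimensional subspace, and each such subspace is spanned by exactly `∏_{i<m} (q^m - q^i)`
tuples. Cancelling `q^(0 + 1 + ⋯ + (m-1))` from both counts gives the formula; for `m = n` one
splits `q^(2k) - 1 = (q^k - 1)(q^k + 1)`.
-/

theorem Finset.prod_range_sub_eq_prod_range_succ {M : Type*} [CommMonoid M] (f : ℕ → M) (n : ℕ) :
    ∏ i ∈ Finset.range n, f (n - i) = ∏ i ∈ Finset.range n, f (i + 1) := by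
  rw [← Finset.prod_range_reflect]
  refine Finset.prod_congr rfl fun i hi => ?_
  congr 1
  have := Finset.mem_range.1 hi
  omega

theorem Nat.prod_range_pow_sub_pow (q : ℕ) {m : ℕ} {f : ℕ → ℕ} (hf : ∀ i < m, i ≤ f i) :
    ∏ i ∈ Finset.range m, (q ^ f i - q ^ i) =
      (∏ i ∈ Finset.range m, q ^ i) * ∏ i ∈ Finset.range m, (q ^ (f i - i) - 1) := by
  rw [← Finset.prod_mul_distrib]
  refine Finset.prod_congr rfl fun i hi => ?_
  rw [Nat.mul_sub, mul_one, ← pow_add, Nat.add_sub_cancel' (hf i (Finset.mem_range.1 hi))]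

theorem Set.ncard_eq_ncard_mul_of_forall_ncard_fiber {α β : Type*} [Finite α] [Finite β]
    {s : Set α} {t : Set β} {f : α → β} (hf : MapsTo f s t) {k : ℕ}
    (h : ∀ b ∈ t, (s ∩ f ⁻¹' {b}).ncard = k) : s.ncard = t.ncard * k := by
  classical
  have := Fintype.ofFinite α
  have := Fintype.ofFinite β
  simp only [Set.ncard_eq_toFinset_card'] at h ⊢
  rw [Finset.card_eq_sum_card_fiberwise (f := f) (t := t.toFinset) (by simpa using hf),
    Finset.sum_congr rfl fun b hb => ?_, Finset.sum_const, smul_eq_mul, mul_comm]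
  rw [← h b (by simpa using hb)]
  congr 1
  ext
  simp

theorem Nat.prod_range_pow_two_mul_sub_one (q n : ℕ) :
    ∏ i ∈ Finset.range n, (q ^ (2 * (n - i)) - 1) =
      (∏ i ∈ Finset.range n, (q ^ (i + 1) + 1)) * ∏ i ∈ Finset.range n, (q ^ (i + 1) - 1) := by
  rw [Finset.prod_range_sub_eq_prod_range_succ (fun j => q ^ (2 * j) - 1),
    ← Finset.prod_mul_distrib]
  refine Finset.prod_congr rfl fun i _ => ?_
  rw [pow_mul', sq, mul_self_tsub_one]

namespace LinearMap.BilinForm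

open Module Submodule Set

variable {K V : Type*} [Field K] [AddCommGroup V] [Module K V] {B : LinearMap.BilinForm K V}

variable (B) in
def independentIsotropicTuples (m : ℕ) : Set (Fin m → V) :=
  {v | LinearIndependent K v ∧ ∀ i j, B (v i) (v j) = 0}

variable (B) in
def totallyIsotropicSubmodules (m : ℕ) : Set (Submodule K V) :=
  {W | finrank K W = m ∧ ∀ x ∈ W, ∀ y ∈ W, B x y = 0}

lemma mem_orthogonal_span_iff {s : Set V} {y : V} :
    y ∈ B.orthogonal (span K s) ↔ ∀ x ∈ s, B x y = 0 :=
  ⟨fun h x hx => h x (subset_span hx),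
    fun h _ hx => (span_le (p := LinearMap.ker (B.flip y))).2 h hx⟩

lemma span_range_le_orthogonal {ι : Type*} {v : ι → V} (h : ∀ i j, B (v i) (v j) = 0) :
    span K (Set.range v) ≤ B.orthogonal (span K (Set.range v)) :=
  span_le.2 <| Set.forall_mem_range.2 fun j =>
    mem_orthogonal_span_iff.2 <| Set.forall_mem_range.2 fun i => h i j

lemma cons_mem_independentIsotropicTuples_iff (hB : B.IsAlt) {m : ℕ} {x : V}
    {w : Fin m → V} :
    Fin.cons x w ∈ B.independentIsotropicTuples (m + 1) ↔
      w ∈ B.independentIsotropicTuples m ∧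
        x ∈ (B.orthogonal (span K (Set.range w)) : Set V) \ (span K (Set.range w) : Set V) := by
  simp only [independentIsotropicTuples, mem_ofPred_eq, linearIndependent_finCons,
    Fin.forall_fin_succ, Fin.cons_zero, Fin.cons_succ, hB.self_eq_zero, true_and,
    mem_sdiff, SetLike.mem_coe, mem_orthogonal_span_iff, Set.forall_mem_range]
  rw [forall_and, forall_congr' fun _ => ⟨hB.isRefl _ _, hB.isRefl _ _⟩]
  tauto

lemma span_mem_totallyIsotropicSubmodules {m : ℕ} {v : Fin m → V}
    (hv : v ∈ B.independentIsotropicTuples m) :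
    span K (Set.range v) ∈ B.totallyIsotropicSubmodules m :=
  ⟨(finrank_span_eq_card hv.1).trans (Fintype.card_fin m), fun x hx _ hy =>
    span_range_le_orthogonal hv.2 hy x hx⟩

variable [Fintype K] [Finite V]

lemma ncard_orthogonal_diff (hB : B.Nondegenerate) {W : Submodule K V}
    (hW : W ≤ B.orthogonal W) :
    ((B.orthogonal W : Set V) \ W).ncard =
      Fintype.card K ^ (finrank K V - finrank K W) - Fintype.card K ^ finrank K W := by
  rw [ncard_sdiff (SetLike.coe_subset_coe.2 hW), ← Nat.card_coe_set_eq, ← Nat.card_coe_set_eq,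
    SetLike.coe_sort_coe, SetLike.coe_sort_coe, Module.natCard_eq_pow_finrank (K := K) (V := W),
    Module.natCard_eq_pow_finrank (K := K) (V := B.orthogonal W), finrank_orthogonal hB,
    Nat.card_eq_fintype_card]

theorem ncard_independentIsotropicTuples (hB : B.IsAlt) (hB' : B.Nondegenerate) (m : ℕ) :
    (B.independentIsotropicTuples m).ncard =
      ∏ i ∈ Finset.range m, (Fintype.card K ^ (finrank K V - i) - Fintype.card K ^ i) := by
  induction m with
  | zero =>
    rw [Finset.prod_range_zero, ncard_eq_one]
    exact ⟨Fin.elim0, Set.eq_singleton_iff_unique_mem.2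
      ⟨⟨linearIndependent_empty_type, fun i => i.elim0⟩, fun _ _ => Subsingleton.elim _ _⟩⟩
  | succ m ih =>
    rw [Finset.prod_range_succ, ← ih]
    refine ncard_eq_ncard_mul_of_forall_ncard_fiber (f := Fin.tail) (fun u hu => ?_) fun w hw => ?_
    · rw [← Fin.cons_self_tail u, cons_mem_independentIsotropicTuples_iff hB] at hu
      exact hu.1
    · have hfiber : B.independentIsotropicTuples (m + 1) ∩ Fin.tail ⁻¹' {w} =
          (fun x => Fin.cons x w) '' ((B.orthogonal (span K (Set.range w)) : Set V) \
            (span K (Set.range w) : Set V)) := by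
        ext u
        refine ⟨fun ⟨hu, htail⟩ => ⟨u 0, ?_, ?_⟩, ?_⟩
        · rw [← Fin.cons_self_tail u, cons_mem_independentIsotropicTuples_iff hB, htail] at hu
          exact hu.2
        · rw [← htail]
          exact Fin.cons_self_tail u
        · rintro ⟨x, hx, rfl⟩
          exact ⟨(cons_mem_independentIsotropicTuples_iff hB).2 ⟨hw, hx⟩, Fin.tail_cons _ _⟩
      rw [hfiber, ncard_image_of_injective _ (Fin.cons_left_injective (α := fun _ => V) w),
        ncard_orthogonal_diff hB' (span_range_le_orthogonal hw.2),
        finrank_span_eq_card hw.1, Fintype.card_fin]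

theorem ncard_independentIsotropicTuples_eq_mul (m : ℕ) :
    (B.independentIsotropicTuples m).ncard = (B.totallyIsotropicSubmodules m).ncard *
      ∏ i : Fin m, (Fintype.card K ^ m - Fintype.card K ^ (i : ℕ)) := by
  have : Finite (Submodule K V) := Finite.of_injective _ SetLike.coe_injective
  refine ncard_eq_ncard_mul_of_forall_ncard_fiber (f := fun v => span K (Set.range v))
    (fun v hv => span_mem_totallyIsotropicSubmodules hv) fun W hW => ?_
  have hfiber : B.independentIsotropicTuples m ∩ (fun v => span K (Set.range v)) ⁻¹' {W} =
      (W.subtype ∘ ·) '' {s : Fin m → W | LinearIndependent K s} := by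
    ext v
    refine ⟨fun ⟨hv, (hspan : span K (Set.range v) = W)⟩ => ?_, ?_⟩
    · have hmem (i : Fin m) : v i ∈ W := hspan ▸ subset_span (Set.mem_range_self i)
      exact ⟨fun i => ⟨v i, hmem i⟩, hv.1.of_comp W.subtype, rfl⟩
    · rintro ⟨s, hs, rfl⟩
      have hli : LinearIndependent K (W.subtype ∘ s) := hs.map' W.subtype W.ker_subtype
      refine ⟨⟨hli, fun i j => hW.2 _ (s i).2 _ (s j).2⟩, ?_⟩
      refine eq_of_le_of_finrank_eq (span_le.2 ?_) ?_
      · rintro _ ⟨i, rfl⟩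
        exact (s i).2
      · rw [finrank_span_eq_card hli, Fintype.card_fin, hW.1]
  rw [hfiber, ncard_image_of_injective _ W.subtype_injective.comp_left, ← Nat.card_coe_set_eq,
    ← hW.1]
  exact card_linearIndependent le_rfl

theorem ncard_totallyIsotropicSubmodules_mul (hB : B.IsAlt) (hB' : B.Nondegenerate) {m : ℕ}
    (hm : 2 * m ≤ finrank K V) :
    (B.totallyIsotropicSubmodules m).ncard *
        ∏ i ∈ Finset.range m, (Fintype.card K ^ (i + 1) - 1) =
      ∏ i ∈ Finset.range m, (Fintype.card K ^ (finrank K V - 2 * i) - 1) := by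
  set q := Fintype.card K
  have hcount := ncard_independentIsotropicTuples_eq_mul (B := B) m
  rw [ncard_independentIsotropicTuples hB hB',
    Fin.prod_univ_eq_prod_range (fun i => q ^ m - q ^ i),
    Nat.prod_range_pow_sub_pow q (f := fun _ => m) fun i hi => hi.le,
    Nat.prod_range_pow_sub_pow q (f := fun i => finrank K V - i) fun i hi => by omega,
    Finset.prod_range_sub_eq_prod_range_succ (fun j => q ^ j - 1)] at hcount
  simp only [Nat.sub_sub, ← two_mul] at hcount
  have hpos : 0 < ∏ i ∈ Finset.range m, q ^ i :=
    Finset.prod_pos fun i _ => pow_pos Fintype.card_pos i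
  exact Nat.eq_of_mul_eq_mul_left hpos (by rw [hcount, mul_left_comm])

end LinearMap.BilinForm

namespace DenseCoding

open Module LinearMap.BilinForm

section

variable (R ι : Type*) [CommRing R] [Fintype ι]

def symplecticForm : LinearMap.BilinForm R ((ι → R) × (ι → R)) :=
  LinearMap.mk₂ R (fun x y => x.1 ⬝ᵥ y.2 - y.1 ⬝ᵥ x.2)
    (fun x x' y => by simp only [Prod.fst_add, Prod.snd_add, add_dotProduct, dotProduct_add]; ring)
    (fun c x y => by
      simp only [Prod.smul_fst, Prod.smul_snd, smul_dotProduct, dotProduct_smul, smul_eq_mul]; ring)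
    (fun x y y' => by simp only [Prod.fst_add, Prod.snd_add, add_dotProduct, dotProduct_add]; ring)
    (fun c x y => by
      simp only [Prod.smul_fst, Prod.smul_snd, smul_dotProduct, dotProduct_smul, smul_eq_mul]; ring)

variable {R ι}

lemma symplecticForm_apply (x y : (ι → R) × (ι → R)) :
    symplecticForm R ι x y = x.1 ⬝ᵥ y.2 - y.1 ⬝ᵥ x.2 :=
  rfl

lemma isAlt_symplecticForm : (symplecticForm R ι).IsAlt :=
  fun _ => sub_self _

lemma nondegenerate_symplecticForm : (symplecticForm R ι).Nondegenerate := by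
  classical
  refine (LinearMap.IsRefl.nondegenerate_iff_separatingLeft (B := symplecticForm R ι)
    isAlt_symplecticForm.isRefl).2 fun x hx => ?_
  ext i
  · simpa [symplecticForm_apply] using hx (0, Pi.single i 1)
  · simpa [symplecticForm_apply] using hx (Pi.single i 1, 0)

end

lemma isoCount_eq_ncard (p n m : ℕ) [Fact p.Prime] :
    isoCount p n m = ((symplecticForm (ZMod p) (Fin n)).totallyIsotropicSubmodules m).ncard :=
  Nat.card_coe_set_eq _

theorem count_totally_isotropic_general (p n m : ℕ) (hp : p.Prime) (hmn : m ≤ n) :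
    (isoCount p n m * ∏ i ∈ Finset.range m, (p ^ (i + 1) - 1) =
      ∏ i ∈ Finset.range m, (p ^ (2 * (n - i)) - 1)) ∧
    (m = n → isoCount p n m = ∏ i ∈ Finset.range n, (p ^ (i + 1) + 1)) := by
  have := Fact.mk hp
  have hcount := ncard_totallyIsotropicSubmodules_mul (B := symplecticForm (ZMod p) (Fin n))
    isAlt_symplecticForm nondegenerate_symplecticForm (m := m)
    (by rw [finrank_prod, finrank_fin_fun]; omega)
  rw [finrank_prod, finrank_fin_fun, ← two_mul, ZMod.card, ← isoCount_eq_ncard] at hcount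
  simp only [← Nat.mul_sub] at hcount
  refine ⟨hcount, ?_⟩
  rintro rfl
  have hpos : 0 < ∏ i ∈ Finset.range m, (p ^ (i + 1) - 1) :=
    Finset.prod_pos fun i _ => Nat.sub_pos_of_lt (Nat.one_lt_pow i.succ_ne_zero hp.one_lt)
  rw [Nat.prod_range_pow_two_mul_sub_one] at hcount
  exact Nat.eq_of_mul_eq_mul_right hpos hcount

/-- the count of m-dimensional totally isotropic subspaces equals
(p^{2n}-1)(p^{2(n-1)}-1)⋯(p^{2(n-m+1)}-1) / ((p^m-1)⋯(p-1)); for m = n it equals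
(p^n+1)(p^{n-1}+1)⋯(p+1). -/
theorem count_totally_isotropic (p n m : ℕ) (hp : p.Prime) (hm : 1 ≤ m) (hmn : m ≤ n) :
    (isoCount p n m * ∏ i ∈ Finset.range m, (p ^ (i + 1) - 1) =
      ∏ i ∈ Finset.range m, (p ^ (2 * (n - i)) - 1)) ∧
    (m = n → isoCount p n m = ∏ i ∈ Finset.range n, (p ^ (i + 1) + 1)) :=
  count_totally_isotropic_general p n m hp hmn

end DenseCoding
end

section
/- Let a maximally entangled state |Φ⟩ on H_A ⊗ H_B (with dim H_B ≥ dim H_A) be given, where H_A = ⊕_{λ∈Ĝ'} H_λ ⊗ M_λ decomposes under a unitary representation of a finite group G into irreducibles H_λ with multiplicity spaces M_λ. Then |Φ⟩ can be written in the form |Φ⟩ = Σ_k √(P_K(k)) Σ_λ √(P_Λ(λ)) e^{iθ_{λ,k}} |ψ_{λ,k}⟩ ⊗ |e_k⟩ with Tr_{M_λ}|ψ_{λ,k}⟩⟨ψ_{λ,k}| independent of k (for each λ, equal to the maximally mixed state on H_λ) — if and only if dim M_λ ≥ dim H_λ for every λ ∈ Ĝ'. -/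
/-!
Read `Φ` as an `A × β` matrix `F`; maximal entanglement is `F Fᴴ = d⁻¹ • 1` with `d = |A|`.

If `Φ` has the stated form, then for any `k` the block `ψ_{c,k}`, read as a `dH c × dM c`
matrix `M`, satisfies `M Mᴴ = (dH c)⁻¹ • 1`; so `M` has full row rank and `dH c ≤ dM c`.

Conversely, enumerate `A` in mixed radix, `τ (c, i, j) = off c + dM c * i + j`, and let
`U (c, i, j) s = ω_{dM c} ^ (i j) * ζ_d ^ (τ (c, i, j) τ s)`. The Fourier factor gives
`Uᴴ U = d • 1`. Inside a block, `τ (c, i, j) - τ (c, i', j) = dM c * (i - i')` does not depend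
on `j`, so pairing rows `i, i'` of the `c`-block of a column reduces to the chirp sum
`∑ j, ω ^ ((i - i') j)`, which is `dM c * δ i i'` because `|i - i'| < dH c ≤ dM c`: every block
of every column is maximally entangled across `H_c ⊗ M_c`. The rows of `Uᴴ F` are orthonormal; extending them to an orthonormal basis `e`
of `ℂ^β` turns `F = d⁻¹ U (Uᴴ F)` into the required form, with `P_K` uniform on the `d`
extended vectors, `P_Λ c = dH c * dM c / d`, no phases, and `ψ_{c,k}` the normalized
`c`-block of a column of `U`.
-/

open scoped Matrix Kronecker ComplexOrder
open Matrix

namespace DenseCoding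

variable {n : Type*}

/-- Basis index of `H_A = ⨁_c H_c ⊗ M_c` with `dim H_c = dH c` and `dim M_c = dM c`. -/
abbrev BlockIndex {Λ : Type*} (dH dM : Λ → ℕ) := Σ c : Λ, Fin (dH c) × Fin (dM c)

theorem _root_.IsPrimitiveRoot.sum_fin_zpow_mul {K : Type*} [Field K] {ζ : K} {n : ℕ}
    (hζ : IsPrimitiveRoot ζ n) (r : ℤ) :
    ∑ m : Fin n, ζ ^ (r * m) = if (n : ℤ) ∣ r then (n : K) else 0 := by
  have hpow : ∀ m : ℕ, ζ ^ (r * m) = (ζ ^ r) ^ m := fun m => by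
    rw [_root_.zpow_mul, zpow_natCast]
  simp only [hpow, Fin.sum_univ_eq_sum_range (fun m => (ζ ^ r) ^ m)]
  split_ifs with h
  · simp [(hζ.zpow_eq_one_iff_dvd r).mpr h]
  · rw [geom_sum_eq (mt (hζ.zpow_eq_one_iff_dvd r).mp h), ← zpow_natCast, ← _root_.zpow_mul,
      mul_comm, _root_.zpow_mul, zpow_natCast, hζ.pow_eq_one, _root_.one_zpow, sub_self, zero_div]

theorem _root_.Complex.zpow_mul_star_zpow {ζ : ℂ} (hζ : ‖ζ‖ = 1) (x y : ℤ) :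
    ζ ^ x * star (ζ ^ y) = ζ ^ (x - y) := by
  have hζ0 : ζ ≠ 0 := norm_ne_zero_iff.mp (hζ ▸ one_ne_zero)
  rw [star_zpow₀, Complex.star_def, ← Complex.inv_eq_conj hζ, _root_.inv_zpow', zpow_sub₀ hζ0,
    div_eq_mul_inv, _root_.zpow_neg]

theorem _root_.Complex.norm_exp_two_pi_I_div (n : ℕ) :
    ‖Complex.exp (2 * Real.pi * Complex.I / n)‖ = 1 := by
  rw [show 2 * Real.pi * Complex.I / n = ((2 * Real.pi / n : ℝ) : ℂ) * Complex.I by push_cast; ring]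
  exact Complex.norm_exp_ofReal_mul_I _

theorem _root_.Int.natCast_dvd_sub_iff_of_lt {n x y : ℕ} (hx : x < n) (hy : y < n) :
    (n : ℤ) ∣ (x : ℤ) - y ↔ x = y :=
  ⟨fun h => ((Nat.modEq_iff_dvd.mpr h).eq_of_lt_of_lt hy hx).symm, by rintro rfl; simp⟩

theorem exists_sigma_equiv_fin_eq_offset_add {Λ : Type*} [Fintype Λ] (n : Λ → ℕ) :
    ∃ (off : Λ → ℕ) (τ : (Σ c, Fin (n c)) ≃ Fin (∑ c, n c)),
      ∀ c x, (τ ⟨c, x⟩ : ℕ) = off c + x := by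
  let e := Fintype.equivFin Λ
  let off : Fin (Fintype.card Λ) → ℕ := fun l => ∑ i : Fin l, n (e.symm (Fin.castLE l.isLt.le i))
  refine ⟨fun c => off (e c),
    (Equiv.sigmaCongrLeft' e).trans (finSigmaFinEquiv.trans (finCongr (e.symm.sum_comp n))), ?_⟩
  intro c x
  set p := Equiv.sigmaCongrLeft' (β := fun c => Fin (n c)) e ⟨c, x⟩
  have h : e.symm.sigmaCongrLeft (β := fun c => Fin (n c)) p = ⟨c, x⟩ :=
    Equiv.apply_symm_apply _ _
  rw [Equiv.sigmaCongrLeft_apply, Sigma.mk.inj_iff] at h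
  have hfst : p.fst = e c := e.symm_apply_eq.mp h.1
  have hsnd : (p.snd : ℕ) = x := (Fin.heq_ext_iff (congrArg n h.1)).mp h.2
  rw [Equiv.trans_apply, Equiv.trans_apply, finCongr_apply, Fin.val_cast, finSigmaFinEquiv_apply]
  change off p.fst + p.snd = off (e c) + x
  rw [hsnd, hfst]

theorem _root_.Matrix.mul_eq_smul_one_comm {m K : Type*} [Fintype m] [DecidableEq m] [Field K]
    {A B : Matrix m m K} {r : K} (hr : r ≠ 0) : A * B = r • 1 ↔ B * A = r • 1 := by
  rw [← inv_smul_eq_iff₀ hr, ← inv_smul_eq_iff₀ hr, ← smul_mul_assoc, ← mul_smul_comm,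
    mul_eq_one_comm]

theorem _root_.Matrix.card_le_card_of_mul_eq_one {m n K : Type*} [Fintype m] [Fintype n]
    [DecidableEq m] [Field K] {M : Matrix m n K} {B : Matrix n m K} (h : M * B = 1) :
    Fintype.card m ≤ Fintype.card n :=
  calc Fintype.card m = (M * B).rank := by rw [h, Matrix.rank_one]
    _ ≤ M.rank := Matrix.rank_mul_le_left M B
    _ ≤ Fintype.card n := Matrix.rank_le_card_width M

section ChirpFourier

variable {Λ : Type*} {dH dM : Λ → ℕ} {N : ℕ}

noncomputable def chirpFourier (ω : Λ → ℂ) (ζ : ℂ) (τ : BlockIndex dH dM ≃ Fin N) :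
    Matrix (BlockIndex dH dM) (BlockIndex dH dM) ℂ :=
  Matrix.of fun a s => ω a.1 ^ ((a.2.1 : ℤ) * a.2.2) * ζ ^ ((τ a : ℤ) * τ s)

theorem chirpFourier_conjTranspose_mul [Fintype Λ] [DecidableEq Λ] {ω : Λ → ℂ} {ζ : ℂ}
    (hω : ∀ c, ‖ω c‖ = 1) (hζ : IsPrimitiveRoot ζ N) (hN : N ≠ 0) (τ : BlockIndex dH dM ≃ Fin N) :
    (chirpFourier ω ζ τ)ᴴ * chirpFourier ω ζ τ = (N : ℂ) • 1 := by
  ext s s'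
  have hterm : ∀ a, star (chirpFourier ω ζ τ a s) * chirpFourier ω ζ τ a s' =
      ζ ^ (((τ s' : ℤ) - τ s) * (τ a : ℕ)) := fun a => by
    rw [mul_comm, chirpFourier, Matrix.of_apply, Matrix.of_apply, star_mul', mul_mul_mul_comm,
      Complex.zpow_mul_star_zpow (hω _), Complex.zpow_mul_star_zpow (hζ.norm'_eq_one hN),
      sub_self, zpow_zero, one_mul]
    ring_nf
  simp only [Matrix.mul_apply, Matrix.conjTranspose_apply, hterm, Matrix.smul_apply,
    Matrix.one_apply, smul_eq_mul, mul_ite, mul_one, mul_zero]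
  rw [τ.sum_comp (fun m => ζ ^ (((τ s' : ℤ) - τ s) * (m : ℕ))), hζ.sum_fin_zpow_mul]
  simp only [Int.natCast_dvd_sub_iff_of_lt (τ s').isLt (τ s).isLt, Fin.val_inj,
    τ.injective.eq_iff, @eq_comm _ s']

theorem sum_chirpFourier_block_mul_star {ω : Λ → ℂ} {ζ : ℂ} {c : Λ}
    (hω : IsPrimitiveRoot (ω c) (dM c)) (hζ : ‖ζ‖ = 1) (hle : dH c ≤ dM c)
    {τ : BlockIndex dH dM ≃ Fin N} {off : Λ → ℕ}
    (hτ : ∀ i j, (τ ⟨c, (i, j)⟩ : ℕ) = off c + (j + dM c * i)) (s : BlockIndex dH dM)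
    (i i' : Fin (dH c)) :
    ∑ j, chirpFourier ω ζ τ ⟨c, (i, j)⟩ s * star (chirpFourier ω ζ τ ⟨c, (i', j)⟩ s) =
      if i = i' then (dM c : ℂ) else 0 := by
  have hdM : dM c ≠ 0 := (i.pos.trans_le hle).ne'
  have hterm : ∀ j, chirpFourier ω ζ τ ⟨c, (i, j)⟩ s * star (chirpFourier ω ζ τ ⟨c, (i', j)⟩ s) =
      ω c ^ (((i : ℤ) - i') * (j : ℕ)) * ζ ^ (((i : ℤ) - i') * dM c * (τ s : ℕ)) := fun j => by
    rw [chirpFourier, Matrix.of_apply, Matrix.of_apply, star_mul', mul_mul_mul_comm,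
      Complex.zpow_mul_star_zpow (hω.norm'_eq_one hdM), Complex.zpow_mul_star_zpow hζ, hτ, hτ]
    push_cast
    ring_nf
  rw [Finset.sum_congr rfl fun j _ => hterm j, ← Finset.sum_mul, hω.sum_fin_zpow_mul]
  simp only [Int.natCast_dvd_sub_iff_of_lt (i.isLt.trans_le hle) (i'.isLt.trans_le hle),
    Fin.val_inj]
  split_ifs with h
  · simp [h]
  · rw [zero_mul]

end ChirpFourier

theorem exists_orthogonal_basis_maxEntangled_on_blocks {Λ : Type*} [Fintype Λ] [DecidableEq Λ]
    {dH dM : Λ → ℕ} [Nonempty (BlockIndex dH dM)] (hle : ∀ c, dH c ≤ dM c) :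
    ∃ U : Matrix (BlockIndex dH dM) (BlockIndex dH dM) ℂ,
      Uᴴ * U = (Fintype.card (BlockIndex dH dM) : ℂ) • 1 ∧
      U * Uᴴ = (Fintype.card (BlockIndex dH dM) : ℂ) • 1 ∧
      ∀ s c (i i' : Fin (dH c)),
        ∑ j, U ⟨c, (i, j)⟩ s * star (U ⟨c, (i', j)⟩ s) = if i = i' then (dM c : ℂ) else 0 := by
  obtain ⟨off, τ₀, hτ₀⟩ := exists_sigma_equiv_fin_eq_offset_add fun c => dH c * dM c
  let τ : BlockIndex dH dM ≃ Fin _ := (Equiv.sigmaCongrRight fun c => finProdFinEquiv).trans τ₀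
  have hτ : ∀ c i j, (τ ⟨c, (i, j)⟩ : ℕ) = off c + (j + dM c * i) := fun c i j => by
    simp [τ, hτ₀, finProdFinEquiv_apply_val]
  have hcard : Fintype.card (BlockIndex dH dM) = ∑ c, dH c * dM c :=
    (Fintype.card_congr τ).trans (Fintype.card_fin _)
  have hN : ∑ c, dH c * dM c ≠ 0 := hcard ▸ Fintype.card_ne_zero
  have hd : (Fintype.card (BlockIndex dH dM) : ℂ) ≠ 0 := Nat.cast_ne_zero.mpr Fintype.card_ne_zero
  set U := chirpFourier (fun c => Complex.exp (2 * Real.pi * Complex.I / dM c))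
    (Complex.exp (2 * Real.pi * Complex.I / (∑ c, dH c * dM c : ℕ))) τ
  have hUU : Uᴴ * U = (Fintype.card (BlockIndex dH dM) : ℂ) • 1 := by
    rw [hcard]
    exact chirpFourier_conjTranspose_mul (fun c => Complex.norm_exp_two_pi_I_div _)
      (Complex.isPrimitiveRoot_exp _ hN) hN τ
  refine ⟨U, hUU, (Matrix.mul_eq_smul_one_comm hd).mp hUU, fun s c i i' => ?_⟩
  exact sum_chirpFourier_block_mul_star (Complex.isPrimitiveRoot_exp _ (i.pos.trans_le (hle c)).ne')
    (Complex.norm_exp_two_pi_I_div _) (hle c) (hτ c) s i i'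

section Factorization

variable {K A β : Type*} [Field K] [StarRing K] [Fintype A] [DecidableEq A]
  {U : Matrix A A K} {d : K}

theorem conjTranspose_mul_mul_conjTranspose_eq_one [Fintype β] (hd : d ≠ 0)
    (hU : Uᴴ * U = d • 1) {F : Matrix A β K} (hF : F * Fᴴ = d⁻¹ • 1) :
    (Uᴴ * F) * (Uᴴ * F)ᴴ = 1 := by
  rw [Matrix.conjTranspose_mul, Matrix.conjTranspose_conjTranspose, Matrix.mul_assoc,
    ← Matrix.mul_assoc F, hF, Matrix.smul_mul, Matrix.one_mul, Matrix.mul_smul, hU, smul_smul,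
    inv_mul_cancel₀ hd, one_smul]

theorem eq_inv_smul_mul_conjTranspose_mul (hd : d ≠ 0) (hU : U * Uᴴ = d • 1)
    (F : Matrix A β K) : F = d⁻¹ • (U * (Uᴴ * F)) := by
  rw [← Matrix.mul_assoc, hU, Matrix.smul_mul, Matrix.one_mul, smul_smul, inv_mul_cancel₀ hd,
    one_smul]

end Factorization

theorem orthoFam_of_mul_conjTranspose_eq_one {ι β : Type*} [Fintype β] [DecidableEq ι]
    {W : Matrix ι β ℂ} (h : W * Wᴴ = 1) : OrthoFam W := fun k k' => by
  simpa [Matrix.mul_apply, Matrix.one_apply, mul_comm, eq_comm] using congrFun (congrFun h k') k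

theorem orthoFam_ofLp_iff_orthonormal {ι β : Type*} [Fintype β] [DecidableEq ι]
    (v : ι → EuclideanSpace ℂ β) : OrthoFam (fun k => (v k).ofLp) ↔ Orthonormal ℂ v := by
  simp only [orthonormal_iff_ite, EuclideanSpace.inner_eq_star_dotProduct, dotProduct,
    Pi.star_apply, mul_comm, OrthoFam]

theorem exists_orthoFam_extension {ι β : Type*} [Fintype β] [DecidableEq ι] [DecidableEq β]
    {w : ι → β → ℂ} (hw : OrthoFam w) (em : ι ↪ β) :
    ∃ e : β → β → ℂ, OrthoFam e ∧ ∀ s, e (em s) = w s := by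
  let v : β → EuclideanSpace ℂ β := fun k => WithLp.toLp 2 (Function.extend em w 0 k)
  have hv : Orthonormal ℂ ((Set.range em).domRestrict v) := by
    rw [orthonormal_iff_ite]
    rintro ⟨_, s, rfl⟩ ⟨_, s', rfl⟩
    have hss : (⟨em s, s, rfl⟩ : Set.range em) = ⟨em s', s', rfl⟩ ↔ s = s' :=
      Subtype.ext_iff.trans em.injective.eq_iff
    simpa [v, Set.domRestrict_apply, em.injective.extend_apply, hss,
      EuclideanSpace.inner_eq_star_dotProduct, dotProduct, mul_comm] using hw s s'
  obtain ⟨b, hb⟩ := hv.exists_orthonormalBasis_extension_of_card_eq finrank_euclideanSpace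
  refine ⟨fun k => (b k).ofLp, (orthoFam_ofLp_iff_orthonormal _).mpr b.orthonormal, fun s => ?_⟩
  simp [hb (em s) ⟨s, rfl⟩, v, em.injective.extend_apply]

theorem _root_.Real.sqrt_inv_mul_sqrt_div_mul_inv_sqrt {p d : ℝ} (hp : 0 < p) (hd : 0 ≤ d) :
    √d⁻¹ * √(p / d) * (√p)⁻¹ = d⁻¹ := by
  rw [← Real.sqrt_mul (inv_nonneg.2 hd), show d⁻¹ * (p / d) = p / d ^ 2 by ring,
    Real.sqrt_div' _ (sq_nonneg d), Real.sqrt_sq hd]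
  have : √p ≠ 0 := by positivity
  field_simp

theorem sum_inv_sqrt_mul_mul_star {n : Type*} [Fintype n] {p : ℝ} (hp : 0 ≤ p) (f g : n → ℂ) :
    ∑ j, ((√p : ℂ)⁻¹ * f j) * star ((√p : ℂ)⁻¹ * g j) = (p : ℂ)⁻¹ * ∑ j, f j * star (g j) := by
  have hr : (√p : ℂ)⁻¹ * star ((√p : ℂ)⁻¹) = (p : ℂ)⁻¹ := by
    rw [star_inv₀, Complex.star_def, Complex.conj_ofReal, ← mul_inv, ← Complex.ofReal_mul,
      Real.mul_self_sqrt hp]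
  rw [← hr, Finset.mul_sum]
  refine Finset.sum_congr rfl fun j _ => ?_
  rw [star_mul']
  ring

theorem sum_indicator_range_inv_card {ι β : Type*} [Fintype ι] [Nonempty ι] [Fintype β]
    (em : ι ↪ β) : ∑ k, (Set.range em).indicator (fun _ => (Fintype.card ι : ℝ)⁻¹) k = 1 := by
  rw [← Fintype.sum_of_injective em em.injective _ _ (fun k hk => Set.indicator_of_notMem hk _)
    fun s => (Set.indicator_of_mem (Set.mem_range_self s) _).symm, Finset.sum_const,
    Finset.card_univ, nsmul_eq_mul, mul_inv_cancel₀ (Nat.cast_ne_zero.mpr Fintype.card_ne_zero)]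

theorem sum_mul_star_eq_one_of_partialTrace {m n : Type*} [Fintype m] [Fintype n]
    [DecidableEq m] [Nonempty m] {f : m × n → ℂ}
    (h : ∀ i i', ∑ j, f (i, j) * star (f (i', j)) =
      if i = i' then (Fintype.card m : ℂ)⁻¹ else 0) :
    ∑ x, f x * star (f x) = 1 := by
  simp only [Fintype.sum_prod_type, h, if_true, Finset.sum_const, Finset.card_univ, nsmul_eq_mul]
  exact mul_inv_cancel₀ (Nat.cast_ne_zero.mpr Fintype.card_ne_zero)

def HasMaxMixedBlockDecomposition {Λ β : Type*} [Fintype Λ] [Fintype β] [DecidableEq β]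
    (dH dM : Λ → ℕ) (Φ : BlockIndex dH dM × β → ℂ) : Prop :=
  ∃ (e : β → β → ℂ) (PK : β → ℝ) (PL : Λ → ℝ) (θ : Λ → β → ℝ)
      (ψ : (c : Λ) → β → (Fin (dH c) × Fin (dM c)) → ℂ),
    OrthoFam e ∧
    (∀ k, 0 ≤ PK k) ∧ (∑ k, PK k = 1) ∧
    (∀ c, 0 ≤ PL c) ∧ (∑ c, PL c = 1) ∧
    (∀ c k, ∑ x, ψ c k x * star (ψ c k x) = 1) ∧
    (∀ c k, ∀ i i' : Fin (dH c),
      ∑ j, ψ c k (i, j) * star (ψ c k (i', j)) = if i = i' then ((dH c : ℂ))⁻¹ else 0) ∧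
    (∀ (a : BlockIndex dH dM) (b : β),
      Φ (a, b) = ∑ k, (↑(Real.sqrt (PK k)) : ℂ) * (↑(Real.sqrt (PL a.1)) : ℂ) *
        Complex.exp (Complex.I * θ a.1 k) * ψ a.1 k a.2 * e k b)

section Decomposition

variable {Λ β : Type*} [Fintype Λ] [Fintype β] [DecidableEq β] {dH dM : Λ → ℕ}
  {Φ : BlockIndex dH dM × β → ℂ}

theorem le_of_hasMaxMixedBlockDecomposition [Nonempty β]
    (h : HasMaxMixedBlockDecomposition dH dM Φ) (c : Λ) : dH c ≤ dM c := by
  obtain ⟨-, -, -, -, ψ, -, -, -, -, -, -, hmix, -⟩ := h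
  obtain ⟨k⟩ := ‹Nonempty β›
  rcases Nat.eq_zero_or_pos (dH c) with h0 | hpos
  · simp [h0]
  let M : Matrix (Fin (dH c)) (Fin (dM c)) ℂ := Matrix.of fun i j => ψ c k (i, j)
  have hM : M * ((dH c : ℂ) • Mᴴ) = 1 := by
    ext i i'
    simp only [M, Matrix.mul_apply, Matrix.smul_apply, Matrix.conjTranspose_apply,
      Matrix.of_apply, smul_eq_mul, mul_left_comm _ (dH c : ℂ), ← Finset.mul_sum, hmix,
      Matrix.one_apply, mul_ite, mul_zero]
    rw [mul_inv_cancel₀ (Nat.cast_ne_zero.mpr hpos.ne')]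
  simpa using M.card_le_card_of_mul_eq_one hM

theorem hasMaxMixedBlockDecomposition_of_factorization [Nonempty (BlockIndex dH dM)]
    (hdH : ∀ c, 0 < dH c) (hle : ∀ c, dH c ≤ dM c)
    {U : Matrix (BlockIndex dH dM) (BlockIndex dH dM) ℂ}
    (hblock : ∀ s c (i i' : Fin (dH c)),
      ∑ j, U ⟨c, (i, j)⟩ s * star (U ⟨c, (i', j)⟩ s) = if i = i' then (dM c : ℂ) else 0)
    {e : β → β → ℂ} (he : OrthoFam e) (em : BlockIndex dH dM ↪ β)
    (hΦ : ∀ a b, Φ (a, b) =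
      ∑ s, ((Fintype.card (BlockIndex dH dM) : ℂ))⁻¹ * U a s * e (em s) b) :
    HasMaxMixedBlockDecomposition dH dM Φ := by
  set d := Fintype.card (BlockIndex dH dM)
  have hp : ∀ c, (0 : ℝ) < dH c * dM c := fun c => by
    have := hdH c; have := (hdH c).trans_le (hle c); positivity
  have hψ : ∀ c s (i i' : Fin (dH c)),
      ∑ j, ((√(dH c * dM c : ℝ) : ℂ)⁻¹ * U ⟨c, (i, j)⟩ s) *
        star ((√(dH c * dM c : ℝ) : ℂ)⁻¹ * U ⟨c, (i', j)⟩ s) =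
      if i = i' then ((dH c : ℂ))⁻¹ else 0 := fun c s i i' => by
    rw [sum_inv_sqrt_mul_mul_star (hp c).le, hblock]
    have hdM : (dM c : ℂ) ≠ 0 := Nat.cast_ne_zero.mpr ((hdH c).trans_le (hle c)).ne'
    split_ifs
    · push_cast
      field_simp
    · rw [mul_zero]
  refine ⟨e, (Set.range em).indicator fun _ => (d : ℝ)⁻¹, fun c => dH c * dM c / d, 0,
    fun c k x => (√(dH c * dM c : ℝ) : ℂ)⁻¹ * U ⟨c, x⟩ (Function.invFun em k), he,
    Set.indicator_nonneg fun _ _ => by positivity, sum_indicator_range_inv_card em,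
    fun c => by positivity, ?_,
    fun c k => have : Nonempty (Fin (dH c)) := ⟨⟨0, hdH c⟩⟩
      sum_mul_star_eq_one_of_partialTrace (by simpa using hψ c _), fun c k => hψ c _, ?_⟩
  · rw [← Finset.sum_div, div_eq_one_iff_eq (Nat.cast_ne_zero.mpr Fintype.card_ne_zero)]
    simp [d, Fintype.card_sigma]
  · intro a b
    rw [hΦ]
    refine Fintype.sum_of_injective em em.injective _ _ (fun k hk => by simp [hk]) fun s => ?_
    have hcoef : ((√(d : ℝ)⁻¹ : ℝ) : ℂ) * ((√(dH a.1 * dM a.1 / d : ℝ) : ℝ) : ℂ) *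
        ((√(dH a.1 * dM a.1 : ℝ) : ℝ) : ℂ)⁻¹ = (d : ℂ)⁻¹ := by
      rw [← Complex.ofReal_inv, ← Complex.ofReal_mul, ← Complex.ofReal_mul,
        Real.sqrt_inv_mul_sqrt_div_mul_inv_sqrt (hp a.1) (Nat.cast_nonneg d),
        Complex.ofReal_inv, Complex.ofReal_natCast]
    simp only [Set.indicator_of_mem (Set.mem_range_self s),
      Function.leftInverse_invFun em.injective s, Pi.zero_apply, Complex.ofReal_zero, mul_zero,
      Complex.exp_zero, mul_one]
    rw [← hcoef]
    ring

theorem hasMaxMixedBlockDecomposition_of_le [DecidableEq Λ] [Nonempty (BlockIndex dH dM)]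
    (hdH : ∀ c, 0 < dH c) (hdim : Fintype.card (BlockIndex dH dM) ≤ Fintype.card β)
    (hmax : ∀ a a', ∑ b, Φ (a, b) * star (Φ (a', b)) =
      if a = a' then ((Fintype.card (BlockIndex dH dM) : ℂ))⁻¹ else 0)
    (hle : ∀ c, dH c ≤ dM c) : HasMaxMixedBlockDecomposition dH dM Φ := by
  have hd : (Fintype.card (BlockIndex dH dM) : ℂ) ≠ 0 := Nat.cast_ne_zero.mpr Fintype.card_ne_zero
  obtain ⟨U, hUU, hUU', hblock⟩ := exists_orthogonal_basis_maxEntangled_on_blocks hle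
  let F : Matrix (BlockIndex dH dM) β ℂ := Matrix.of fun a b => Φ (a, b)
  have hF : F * Fᴴ = ((Fintype.card (BlockIndex dH dM) : ℂ))⁻¹ • 1 := by
    ext a a'
    simp only [F, Matrix.mul_apply, Matrix.conjTranspose_apply, Matrix.of_apply, hmax,
      Matrix.smul_apply, Matrix.one_apply, smul_eq_mul, mul_ite, mul_one, mul_zero]
  obtain ⟨em⟩ := Function.Embedding.nonempty_of_card_le hdim
  obtain ⟨e, he, heW⟩ := exists_orthoFam_extension
    (orthoFam_of_mul_conjTranspose_eq_one (conjTranspose_mul_mul_conjTranspose_eq_one hd hUU hF)) em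
  refine hasMaxMixedBlockDecomposition_of_factorization hdH hle hblock he em fun a b => ?_
  have hΦ := congrFun (congrFun (eq_inv_smul_mul_conjTranspose_mul hd hUU' F) a) b
  rw [Matrix.smul_apply, Matrix.mul_apply, Finset.smul_sum] at hΦ
  rw [show Φ (a, b) = F a b from rfl, hΦ]
  simp only [heW, smul_eq_mul, mul_assoc]

end Decomposition

theorem maxEnt_C1_iff_multiplicity_general
    {Λ β : Type*} [Fintype Λ] [DecidableEq Λ] [Fintype β] [DecidableEq β]
    (dH dM : Λ → ℕ) (hdH : ∀ c, 0 < dH c)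
    (hdim : Fintype.card (Σ c : Λ, Fin (dH c) × Fin (dM c)) ≤ Fintype.card β)
    (Φ : (Σ c : Λ, Fin (dH c) × Fin (dM c)) × β → ℂ)
    (hnorm : ∑ q, Φ q * star (Φ q) = 1)
    (hmax : ∀ a a' : Σ c : Λ, Fin (dH c) × Fin (dM c),
      ∑ b, Φ (a, b) * star (Φ (a', b)) =
        if a = a' then ((Fintype.card (Σ c : Λ, Fin (dH c) × Fin (dM c)) : ℂ))⁻¹ else 0) :
    (∃ (e : β → β → ℂ) (PK : β → ℝ) (PL : Λ → ℝ) (θ : Λ → β → ℝ)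
        (ψ : (c : Λ) → β → (Fin (dH c) × Fin (dM c)) → ℂ),
      OrthoFam e ∧
      (∀ k, 0 ≤ PK k) ∧ (∑ k, PK k = 1) ∧
      (∀ c, 0 ≤ PL c) ∧ (∑ c, PL c = 1) ∧
      (∀ c k, ∑ x, ψ c k x * star (ψ c k x) = 1) ∧
      (∀ c k, ∀ i i' : Fin (dH c),
        ∑ j, ψ c k (i, j) * star (ψ c k (i', j)) = if i = i' then ((dH c : ℂ))⁻¹ else 0) ∧
      (∀ (a : Σ c : Λ, Fin (dH c) × Fin (dM c)) (b : β),
        Φ (a, b) = ∑ k, (↑(Real.sqrt (PK k)) : ℂ) * (↑(Real.sqrt (PL a.1)) : ℂ) *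
          Complex.exp (Complex.I * θ a.1 k) * ψ a.1 k a.2 * e k b))
    ↔ (∀ c : Λ, dH c ≤ dM c) := by
  obtain ⟨⟨a, k⟩, -, -⟩ := Finset.exists_ne_zero_of_sum_ne_zero (hnorm ▸ one_ne_zero)
  have : Nonempty β := ⟨k⟩
  have : Nonempty (BlockIndex dH dM) := ⟨a⟩
  exact ⟨le_of_hasMaxMixedBlockDecomposition, hasMaxMixedBlockDecomposition_of_le hdH hdim hmax⟩

/-- a maximally entangled state on H_A ⊗ H_B, where
H_A = ⊕_c H_c ⊗ M_c (irreps H_c = ℂ^{dH c} with multiplicity spaces M_c = ℂ^{dM c}),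
admits the form |Φ⟩ = Σ_k √P_K(k) Σ_c √P_Λ(c) e^{iθ_{c,k}} |ψ_{c,k}⟩ ⊗ |e_k⟩, with
Tr_{M_c}|ψ_{c,k}⟩⟨ψ_{c,k}| independent of k and equal to the maximally mixed state
on H_c, if and only if dim M_c ≥ dim H_c for every c. -/
theorem maxEnt_C1_iff_multiplicity
    {Λ β : Type*} [Fintype Λ] [DecidableEq Λ] [Fintype β] [DecidableEq β]
    (dH dM : Λ → ℕ) (hdH : ∀ c, 0 < dH c) (hdM : ∀ c, 0 < dM c)
    (hdim : Fintype.card (Σ c : Λ, Fin (dH c) × Fin (dM c)) ≤ Fintype.card β)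
    (Φ : (Σ c : Λ, Fin (dH c) × Fin (dM c)) × β → ℂ)
    (hnorm : ∑ q, Φ q * star (Φ q) = 1)
    (hmax : ∀ a a' : Σ c : Λ, Fin (dH c) × Fin (dM c),
      ∑ b, Φ (a, b) * star (Φ (a', b)) =
        if a = a' then ((Fintype.card (Σ c : Λ, Fin (dH c) × Fin (dM c)) : ℂ))⁻¹ else 0) :
    (∃ (e : β → β → ℂ) (PK : β → ℝ) (PL : Λ → ℝ) (θ : Λ → β → ℝ)
        (ψ : (c : Λ) → β → (Fin (dH c) × Fin (dM c)) → ℂ),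
      OrthoFam e ∧
      (∀ k, 0 ≤ PK k) ∧ (∑ k, PK k = 1) ∧
      (∀ c, 0 ≤ PL c) ∧ (∑ c, PL c = 1) ∧
      (∀ c k, ∑ x, ψ c k x * star (ψ c k x) = 1) ∧
      (∀ c k, ∀ i i' : Fin (dH c),
        ∑ j, ψ c k (i, j) * star (ψ c k (i', j)) = if i = i' then ((dH c : ℂ))⁻¹ else 0) ∧
      (∀ (a : Σ c : Λ, Fin (dH c) × Fin (dM c)) (b : β),
        Φ (a, b) = ∑ k, (↑(Real.sqrt (PK k)) : ℂ) * (↑(Real.sqrt (PL a.1)) : ℂ) *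
          Complex.exp (Complex.I * θ a.1 k) * ψ a.1 k a.2 * e k b))
    ↔ (∀ c : Λ, dH c ≤ dM c) :=
  maxEnt_C1_iff_multiplicity_general dH dM hdH hdim Φ hnorm hmax

end DenseCoding
end
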